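/- arXiv:2307.15788 — 7 statements merged into one kernel-verified Lean document; each statement's English description precedes it below -/
import Mathlib

section
/- Let 𝔪 and 𝔪̃ be eigenvalue multiplicity vectors for n. Then F(𝔪) is contained in the closure of F(𝔪̃) in Sym₀(n) if and only if 𝔪 ≤ 𝔪̃. -/
open Matrix Finset

section WeylHelpers
variable {n : ℕ}



lemma dot_sq_le (x : Fin n → ℝ) (i j : Fin n) : |x i * x j| ≤ x ⬝ᵥ x := by
  have hi : x i * x i ≤ x ⬝ᵥ x :=
    Finset.single_le_sum (f := fun k => x k * x k) (fun k _ => mul_self_nonneg _) (mem_univ i)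
  have hj : x j * x j ≤ x ⬝ᵥ x :=
    Finset.single_le_sum (f := fun k => x k * x k) (fun k _ => mul_self_nonneg _) (mem_univ j)
  rcases abs_cases (x i * x j) with ⟨h, _⟩ | ⟨h, _⟩ <;> nlinarith [sq_nonneg (x i - x j), sq_nonneg (x i + x j)]

lemma dot_pos {x : Fin n → ℝ} (hx : x ≠ 0) : 0 < x ⬝ᵥ x := by
  obtain ⟨i, hi⟩ := Function.ne_iff.mp hx
  exact Finset.sum_pos' (fun k _ => mul_self_nonneg _) ⟨i, mem_univ i, mul_self_pos.mpr hi⟩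

lemma quad_le (M : Matrix (Fin n) (Fin n) ℝ) (x : Fin n → ℝ) :
    |x ⬝ᵥ (M *ᵥ x)| ≤ (∑ i, ∑ j, |M i j|) * (x ⬝ᵥ x) := by
  have h1 : x ⬝ᵥ (M *ᵥ x) = ∑ i, ∑ j, x i * (M i j * x j) := by
    simp [dotProduct, Matrix.mulVec, Finset.mul_sum]
  rw [h1, Finset.sum_mul]
  refine (Finset.abs_sum_le_sum_abs _ _).trans (Finset.sum_le_sum fun i _ => ?_)
  rw [Finset.sum_mul]
  refine (Finset.abs_sum_le_sum_abs _ _).trans (Finset.sum_le_sum fun j _ => ?_)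
  have h2 : |x i * (M i j * x j)| = |M i j| * |x i * x j| := by
    rw [abs_mul, abs_mul, abs_mul]; ring
  rw [h2]
  exact mul_le_mul_of_nonneg_left (dot_sq_le x i j) (abs_nonneg _)

lemma quad_diag (P : Matrix (Fin n) (Fin n) ℝ) (d : Fin n → ℝ) (x : Fin n → ℝ) :
    x ⬝ᵥ ((P * diagonal d * Pᵀ) *ᵥ x) = ∑ i, d i * ((Pᵀ *ᵥ x) i * (Pᵀ *ᵥ x) i) := by
  have h : (P * diagonal d * Pᵀ) *ᵥ x = P *ᵥ (diagonal d *ᵥ (Pᵀ *ᵥ x)) := by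
    rw [mulVec_mulVec, mulVec_mulVec]
  rw [h, dotProduct_mulVec]
  have hxy : x ᵥ* P = Pᵀ *ᵥ x := (mulVec_transpose P x).symm
  rw [hxy]
  simp only [dotProduct, mulVec_diagonal]
  exact Finset.sum_congr rfl fun i _ => by ring

lemma dot_transpose (P : Matrix (Fin n) (Fin n) ℝ) (hP : Pᵀ * P = 1) (x : Fin n → ℝ) :
    (Pᵀ *ᵥ x) ⬝ᵥ (Pᵀ *ᵥ x) = x ⬝ᵥ x := by
  have hPP : P * Pᵀ = 1 := mul_eq_one_comm.mp hP
  rw [dotProduct_mulVec, vecMul_transpose, mulVec_mulVec, hPP, one_mulVec]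

lemma trace_conj (P : Matrix (Fin n) (Fin n) ℝ) (hP : Pᵀ * P = 1) (d : Fin n → ℝ) :
    (P * diagonal d * Pᵀ).trace = ∑ i, d i := by
  rw [trace_mul_cycle, hP, one_mul, trace_diagonal]

lemma exists_test (P Q : Matrix (Fin n) (Fin n) ℝ) (a : Fin n) :
    ∃ x : Fin n → ℝ, x ≠ 0 ∧ (∀ i, i < a → (Pᵀ *ᵥ x) i = 0) ∧ (∀ j, a < j → (Qᵀ *ᵥ x) j = 0) := by
  classical
  let f : (Fin n → ℝ) →ₗ[ℝ] ({i : Fin n // i ≠ a} → ℝ) :=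
  { toFun := fun x k => if (k : Fin n) < a then (Pᵀ *ᵥ x) k else (Qᵀ *ᵥ x) k
    map_add' := by
      intro x y; funext k
      by_cases h : (k : Fin n) < a <;> simp [h, Matrix.mulVec_add]
    map_smul' := by
      intro cc x; funext k
      by_cases h : (k : Fin n) < a <;> simp [h, Matrix.mulVec_smul] }
  have hcard : Fintype.card {i : Fin n // i ≠ a} = n - 1 := by
    have h1 : Fintype.card {i : Fin n // ¬ i = a} = Fintype.card (Fin n) - Fintype.card {i : Fin n // i = a} :=
      Fintype.card_subtype_compl _
    simpa [Fintype.card_subtype_eq] using h1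
  have hker : LinearMap.ker f ≠ ⊥ := by
    intro hbot
    have h1 := LinearMap.finrank_range_add_finrank_ker f
    rw [hbot, finrank_bot] at h1
    have h2 : Module.finrank ℝ (LinearMap.range f) ≤ Module.finrank ℝ ({i : Fin n // i ≠ a} → ℝ) :=
      (LinearMap.range f).finrank_le
    have h3 : Module.finrank ℝ ({i : Fin n // i ≠ a} → ℝ) = n - 1 := by
      rw [Module.finrank_pi]; exact hcard
    have h4 : Module.finrank ℝ (Fin n → ℝ) = n := by
      rw [Module.finrank_pi]; exact Fintype.card_fin n
    have hn : 0 < n := a.pos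
    omega
  obtain ⟨x, hxmem, hx0⟩ := Submodule.exists_mem_ne_zero_of_ne_bot hker
  have hfx : f x = 0 := LinearMap.mem_ker.mp hxmem
  refine ⟨x, hx0, ?_, ?_⟩
  · intro i hi
    have := congrFun hfx ⟨i, hi.ne⟩
    simpa [f, hi] using this
  · intro j hj
    have := congrFun hfx ⟨j, hj.ne'⟩
    simpa [f, not_lt.mpr hj.le] using this

lemma weyl_one {S T : Matrix (Fin n) (Fin n) ℝ} {lam mu : Fin n → ℝ}
    (hlam : Monotone lam) (hmu : Monotone mu)
    {P Q : Matrix (Fin n) (Fin n) ℝ} (hP : Pᵀ * P = 1) (hQ : Qᵀ * Q = 1)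
    (hS : S = P * diagonal lam * Pᵀ) (hT : T = Q * diagonal mu * Qᵀ) (a : Fin n) :
    lam a ≤ mu a + ∑ i, ∑ j, |S i j - T i j| := by
  obtain ⟨x, hx0, hPx, hQx⟩ := exists_test P Q a
  have hxx := dot_pos hx0
  set C := ∑ i, ∑ j, |S i j - T i j| with hC
  -- lower bound for S
  have hlow : lam a * (x ⬝ᵥ x) ≤ x ⬝ᵥ (S *ᵥ x) := by
    rw [hS, quad_diag]
    have h1 : lam a * (x ⬝ᵥ x) = ∑ i, lam a * ((Pᵀ *ᵥ x) i * (Pᵀ *ᵥ x) i) := by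
      rw [← Finset.mul_sum]
      congr 1
      exact (dot_transpose P hP x).symm
    rw [h1]
    refine Finset.sum_le_sum fun i _ => ?_
    rcases lt_or_ge i a with h | h
    · rw [hPx i h]; simp
    · exact mul_le_mul_of_nonneg_right (hlam h) (mul_self_nonneg _)
  -- upper bound for T
  have hup : x ⬝ᵥ (T *ᵥ x) ≤ mu a * (x ⬝ᵥ x) := by
    rw [hT, quad_diag]
    have h1 : mu a * (x ⬝ᵥ x) = ∑ i, mu a * ((Qᵀ *ᵥ x) i * (Qᵀ *ᵥ x) i) := by
      rw [← Finset.mul_sum]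
      congr 1
      exact (dot_transpose Q hQ x).symm
    rw [h1]
    refine Finset.sum_le_sum fun i _ => ?_
    rcases le_or_gt i a with h | h
    · exact mul_le_mul_of_nonneg_right (hmu h) (mul_self_nonneg _)
    · rw [hQx i h]; simp
  have hdiff : x ⬝ᵥ (S *ᵥ x) - x ⬝ᵥ (T *ᵥ x) ≤ C * (x ⬝ᵥ x) := by
    have h1 : x ⬝ᵥ (S *ᵥ x) - x ⬝ᵥ (T *ᵥ x) = x ⬝ᵥ ((S - T) *ᵥ x) := by
      rw [Matrix.sub_mulVec, dotProduct_sub]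
    rw [h1]
    have := quad_le (S - T) x
    have h2 : (∑ i, ∑ j, |(S - T) i j|) = C := by
      rw [hC]
      exact Finset.sum_congr rfl fun i _ => Finset.sum_congr rfl fun j _ => by rw [Matrix.sub_apply]
    rw [h2] at this
    exact (le_abs_self _).trans this
  nlinarith

lemma weyl {S T : Matrix (Fin n) (Fin n) ℝ} {lam mu : Fin n → ℝ}
    (hlam : Monotone lam) (hmu : Monotone mu)
    {P Q : Matrix (Fin n) (Fin n) ℝ} (hP : Pᵀ * P = 1) (hQ : Qᵀ * Q = 1)
    (hS : S = P * diagonal lam * Pᵀ) (hT : T = Q * diagonal mu * Qᵀ) (a : Fin n) :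
    |lam a - mu a| ≤ ∑ i, ∑ j, |S i j - T i j| := by
  rw [abs_sub_le_iff]
  constructor
  · have := weyl_one hlam hmu hP hQ hS hT a
    linarith
  · have := weyl_one hmu hlam hQ hP hT hS a
    have heq : (∑ i, ∑ j, |T i j - S i j|) = ∑ i, ∑ j, |S i j - T i j| :=
      Finset.sum_congr rfl fun i _ => Finset.sum_congr rfl fun j _ => abs_sub_comm _ _
    linarith [heq ▸ this]

end WeylHelpers


/-- `S` has multiplicity type given by the monotone surjective map `π : Fin n → Fin L`:
`S` is orthogonally diagonalizable with nondecreasing eigenvalues `λ₁ ≤ ⋯ ≤ λ_n` such that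
`λ_a = λ_b` iff `π a = π b`. -/
def MultType {n L : ℕ} (π : Fin n → Fin L) (S : Matrix (Fin n) (Fin n) ℝ) : Prop :=
  ∃ lam : Fin n → ℝ, Monotone lam ∧ (∀ a b, lam a = lam b ↔ π a = π b) ∧
    ∃ P : Matrix (Fin n) (Fin n) ℝ, Pᵀ * P = 1 ∧ S = P * Matrix.diagonal lam * Pᵀ

/-- The face `F(𝔪) ⊆ Sym₀(n)`: traceless matrices of multiplicity type `𝔪`. -/
def Face {n L : ℕ} (π : Fin n → Fin L) : Set (Matrix (Fin n) (Fin n) ℝ) :=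
  {S | S.trace = 0 ∧ MultType π S}

/-- The multiplicity `m_i`, i.e. the cardinality of the fiber `π⁻¹(i)`. -/
def multCard {n L : ℕ} (π : Fin n → Fin L) (i : Fin L) : ℕ :=
  (Finset.univ.filter fun a => π a = i).card

/-- `𝔪 ≤ 𝔪̃` : there is a surjective nondecreasing `J` with `m_i = Σ_{j ∈ J⁻¹(i)} m̃_j`.
Here `π` encodes `𝔪` and `π'` encodes `𝔪̃`. -/
def MultLE {n L L' : ℕ} (π : Fin n → Fin L) (π' : Fin n → Fin L') : Prop :=
  ∃ J : Fin L' → Fin L, Monotone J ∧ Function.Surjective J ∧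
    ∀ i : Fin L, multCard π i = ∑ j ∈ Finset.univ.filter (fun j => J j = i), multCard π' j

section Comb
variable {n L Lt : ℕ}

lemma downset_mem_iff {S : Finset (Fin n)} (h : ∀ a ∈ S, ∀ b, b ≤ a → b ∈ S) (a : Fin n) :
    a ∈ S ↔ a.val < S.card := by
  constructor
  · intro ha
    have hsub : Finset.Iic a ⊆ S := fun b hb => h a ha b (Finset.mem_Iic.mp hb)
    have hc := Finset.card_le_card hsub
    rw [Fin.card_Iic] at hc
    omega
  · intro ha
    by_contra hna
    have hsub : S ⊆ Finset.Iio a := by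
      intro c hc
      rw [Finset.mem_Iio]
      by_contra hca
      exact hna (h c hc a (not_lt.mp hca))
    have hc := Finset.card_le_card hsub
    rw [Fin.card_Iio] at hc
    omega

lemma card_lt_eq_sum (f : Fin n → Fin L) (i : Fin L) :
    (univ.filter fun a => f a < i).card = ∑ i' ∈ univ.filter (· < i), multCard f i' := by
  rw [Finset.card_eq_sum_card_fiberwise (f := f) (t := univ.filter (· < i))
    (fun a ha => by simp only [mem_coe, mem_filter, mem_univ, true_and] at *; exact ha)]
  refine Finset.sum_congr rfl fun j hj => ?_
  have hji : j < i := by simpa using hj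
  unfold multCard
  congr 1
  ext b
  simp only [mem_filter, mem_univ, true_and]
  exact ⟨fun ⟨_, h2⟩ => h2, fun h2 => ⟨h2 ▸ hji, h2⟩⟩

lemma monotone_eq_of_multCard {f g : Fin n → Fin L} (hf : Monotone f) (hg : Monotone g)
    (h : ∀ i, multCard f i = multCard g i) : f = g := by
  have key : ∀ (u : Fin n → Fin L), Monotone u → ∀ i a,
      (u a < i ↔ a.val < (univ.filter fun b => u b < i).card) := by
    intro u hu i a
    have hds : ∀ c ∈ univ.filter fun b => u b < i, ∀ b, b ≤ c →
        b ∈ univ.filter fun b => u b < i := by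
      intro c hc b hb
      simp only [mem_filter, mem_univ, true_and] at *
      exact lt_of_le_of_lt (hu hb) hc
    have := downset_mem_iff hds a
    simpa using this
  have hcards : ∀ i, (univ.filter fun b => f b < i).card = (univ.filter fun b => g b < i).card := by
    intro i
    rw [card_lt_eq_sum, card_lt_eq_sum]
    exact Finset.sum_congr rfl fun j _ => h j
  funext a
  have hn1 : ¬ f a < g a := by
    rw [key f hf (g a) a, hcards (g a), ← key g hg (g a) a]
    exact lt_irrefl _
  have hn2 : ¬ g a < f a := by
    rw [key g hg (f a) a, ← hcards (f a), ← key f hf (f a) a]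
    exact lt_irrefl _
  exact le_antisymm (not_lt.mp hn2) (not_lt.mp hn1)

lemma multCard_comp (u : Fin n → Fin Lt) (J : Fin Lt → Fin L) (i : Fin L) :
    multCard (fun a => J (u a)) i = ∑ j ∈ univ.filter (fun j => J j = i), multCard u j := by
  unfold multCard
  rw [Finset.card_eq_sum_card_fiberwise (f := u) (t := univ.filter fun j => J j = i)
    (fun a ha => by simp only [mem_coe, mem_filter, mem_univ, true_and] at *; exact ha)]
  refine Finset.sum_congr rfl fun j hj => ?_
  have hji : J j = i := by simpa using hj
  congr 1
  ext b
  simp only [mem_filter, mem_univ, true_and]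
  exact ⟨fun ⟨_, h2⟩ => h2, fun h2 => ⟨by rw [h2, hji], h2⟩⟩

lemma multLE_factor {π : Fin n → Fin L} {πt : Fin n → Fin Lt} (hπmono : Monotone π)
    (hπtmono : Monotone πt) (h : MultLE π πt) :
    ∃ J : Fin Lt → Fin L, Monotone J ∧ π = fun a => J (πt a) := by
  obtain ⟨J, hJm, _, hsum⟩ := h
  refine ⟨J, hJm, monotone_eq_of_multCard hπmono (hJm.comp hπtmono) fun i => ?_⟩
  rw [hsum i, multCard_comp]

lemma multLE_of_refines {π : Fin n → Fin L} {πt : Fin n → Fin Lt} (hπmono : Monotone π)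
    (hπsurj : Function.Surjective π) (hπtmono : Monotone πt) (hπtsurj : Function.Surjective πt)
    (R : ∀ a b, πt a = πt b → π a = π b) : MultLE π πt := by
  classical
  set s := Function.surjInv hπtsurj with hs
  have hst : ∀ j, πt (s j) = j := fun j => Function.surjInv_eq hπtsurj j
  have hfa : ∀ a, π (s (πt a)) = π a := fun a => R _ _ (hst (πt a))
  refine ⟨fun j => π (s j), ?_, ?_, ?_⟩
  · intro j j' hle
    rcases le_or_gt (s j) (s j') with h | h
    · exact hπmono h
    · have h2 : j' ≤ j := by
        have := hπtmono h.le
        rwa [hst, hst] at this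
      have : j = j' := le_antisymm hle h2
      rw [this]
  · intro i
    obtain ⟨a, ha⟩ := hπsurj i
    exact ⟨πt a, by show π (s (πt a)) = i; rw [hfa a, ha]⟩
  · intro i
    have h1 : multCard π i = multCard (fun a => π (s (πt a))) i := by
      unfold multCard
      congr 1
      ext a
      simp [hfa]
    rw [h1, multCard_comp πt (fun j => π (s j)) i]

end Comb

-- forward direction core: the refinement property
theorem refines_of_subset (n L Lt : ℕ)
    (π : Fin n → Fin L) (hπmono : Monotone π)
    (πt : Fin n → Fin Lt)
    (hsub : Face π ⊆ closure (Face πt)) :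
    ∀ a b, πt a = πt b → π a = π b := by
  intro a b hab
  -- construct S₀
  set K : ℝ := (∑ x, ((π x : ℕ) : ℝ)) / n with hK
  set lam : Fin n → ℝ := fun x => ((π x : ℕ) : ℝ) - K with hlam
  have hlammono : Monotone lam := by
    intro x y hxy
    have := hπmono hxy
    simp only [hlam]
    have : ((π x : ℕ) : ℝ) ≤ ((π y : ℕ) : ℝ) := Nat.cast_le.mpr this
    linarith
  have hlamiff : ∀ x y, lam x = lam y ↔ π x = π y := by
    intro x y
    simp only [hlam, sub_left_inj, Nat.cast_inj]
    exact ⟨fun h => Fin.val_injective h, fun h => by rw [h]⟩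
  set S₀ : Matrix (Fin n) (Fin n) ℝ := diagonal lam with hS₀
  have hS₀eq : S₀ = 1 * diagonal lam * (1 : Matrix (Fin n) (Fin n) ℝ)ᵀ := by
    rw [transpose_one, one_mul, mul_one]
  have hmem : S₀ ∈ Face π := by
    refine ⟨?_, lam, hlammono, hlamiff, 1, by rw [transpose_one, one_mul], hS₀eq⟩
    rw [hS₀, trace_diagonal]
    have hn : (0:ℕ) < n := a.pos
    have hnn : (n : ℝ) ≠ 0 := Nat.cast_ne_zero.mpr hn.ne'
    simp only [hlam, Finset.sum_sub_distrib, Finset.sum_const, card_univ, Fintype.card_fin,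
      nsmul_eq_mul, hK]
    field_simp
    ring
  have hcl := hsub hmem
  set U : Set (Matrix (Fin n) (Fin n) ℝ) := {T | (∑ i, ∑ j, |S₀ i j - T i j|) < 1/2} with hU
  have hUopen : IsOpen U := by
    have hc : Continuous fun T : Matrix (Fin n) (Fin n) ℝ => ∑ i, ∑ j, |S₀ i j - T i j| := by
      refine continuous_finset_sum _ fun i _ => continuous_finset_sum _ fun j _ => ?_
      have : Continuous fun T : Matrix (Fin n) (Fin n) ℝ => T i j :=
        (continuous_apply j).comp (continuous_apply i)
      exact (continuous_const.sub this).abs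
    exact isOpen_lt hc continuous_const
  have hS₀U : S₀ ∈ U := by
    simp [hU]
  obtain ⟨T, hTU, hTF⟩ := mem_closure_iff.mp hcl U hUopen hS₀U
  obtain ⟨htr, mu, hmumono, hmuiff, Q, hQ, hTeq⟩ := hTF
  have hweyl : ∀ c : Fin n, |lam c - mu c| ≤ ∑ i, ∑ j, |S₀ i j - T i j| :=
    fun c => weyl hlammono hmumono (by rw [transpose_one, one_mul]) hQ hS₀eq hTeq c
  have hmuab : mu a = mu b := (hmuiff a b).mpr hab
  by_contra hne
  have hge : (1:ℝ) ≤ |lam a - lam b| := by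
    have hvne : (π a : ℕ) ≠ (π b : ℕ) := fun h => hne (Fin.val_injective h)
    have : lam a - lam b = ((π a : ℕ) : ℝ) - ((π b : ℕ) : ℝ) := by simp only [hlam]; ring
    rw [this]
    rcases hvne.lt_or_gt with h | h
    · rw [abs_sub_comm]
      rw [abs_of_nonneg (by
        have : ((π a : ℕ) : ℝ) ≤ ((π b : ℕ) : ℝ) := Nat.cast_le.mpr h.le
        linarith)]
      have : ((π a : ℕ) : ℝ) + 1 ≤ ((π b : ℕ) : ℝ) := by
        exact_mod_cast Nat.succ_le_of_lt h
      linarith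
    · rw [abs_of_nonneg (by
        have : ((π b : ℕ) : ℝ) ≤ ((π a : ℕ) : ℝ) := Nat.cast_le.mpr h.le
        linarith)]
      have : ((π b : ℕ) : ℝ) + 1 ≤ ((π a : ℕ) : ℝ) := by
        exact_mod_cast Nat.succ_le_of_lt h
      linarith
  have htri : |lam a - lam b| ≤ |lam a - mu a| + |mu b - lam b| := by
    have : lam a - lam b = (lam a - mu a) + (mu b - lam b) := by rw [← hmuab]; ring
    rw [this]
    exact abs_add_le _ _
  have h1 := hweyl a
  have h2 := hweyl b
  have hTU' : (∑ i, ∑ j, |S₀ i j - T i j|) < 1/2 := hTU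
  rw [abs_sub_comm] at h2
  linarith

theorem subset_of_refines (n L Lt : ℕ)
    (π : Fin n → Fin L) (hπmono : Monotone π)
    (πt : Fin n → Fin Lt) (hπtmono : Monotone πt)
    (R : ∀ a b, πt a = πt b → π a = π b) :
    Face π ⊆ closure (Face πt) := by
  intro S hS
  obtain ⟨htr, lam, hmono, hiff, P, hP, hSeq⟩ := hS
  set K : ℝ := (∑ x, ((πt x : ℕ) : ℝ)) / n with hK
  set c : Fin n → ℝ := fun x => ((πt x : ℕ) : ℝ) - K with hc
  set μ : ℝ → Fin n → ℝ := fun ε x => lam x + ε * c x with hμ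
  set F : ℝ → Matrix (Fin n) (Fin n) ℝ := fun ε => P * diagonal (μ ε) * Pᵀ with hF
  have hsumc : ∑ x, c x = 0 := by
    rcases Nat.eq_zero_or_pos n with h0 | hpos
    · exact Finset.sum_eq_zero fun x _ => absurd x.isLt (by omega)
    · have hnn : (n : ℝ) ≠ 0 := Nat.cast_ne_zero.mpr hpos.ne'
      simp only [hc, Finset.sum_sub_distrib, Finset.sum_const, card_univ, Fintype.card_fin,
        nsmul_eq_mul, hK]
      field_simp
      ring
  have htrlam : ∑ x, lam x = 0 := by
    rw [hSeq, trace_conj P hP lam] at htr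
    exact htr
  have hcont : Continuous F := by
    refine Continuous.matrix_mul (Continuous.matrix_mul continuous_const
      (Continuous.matrix_diagonal ?_)) continuous_const
    exact continuous_pi fun x => continuous_const.add (continuous_id.mul continuous_const)
  have hF0 : F 0 = S := by
    rw [hSeq]
    simp only [hF, hμ]
    congr 1
    congr 1
    congr 1
    funext x
    ring
  have htend : Filter.Tendsto F (nhdsWithin 0 (Set.Ioi 0)) (nhds S) := by
    rw [← hF0]
    exact (hcont.tendsto 0).mono_left nhdsWithin_le_nhds
  refine mem_closure_of_tendsto htend ?_
  have hev1 : ∀ᶠ ε in nhds (0:ℝ), ∀ p : Fin n × Fin n, π p.1 < π p.2 → μ ε p.1 < μ ε p.2 := by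
    rw [Filter.eventually_all]
    intro p
    by_cases hp : π p.1 < π p.2
    · have hab : p.1 < p.2 := by
        by_contra h
        exact absurd (hπmono (not_lt.mp h)) (not_le.mpr hp)
      have hlt : lam p.1 < lam p.2 :=
        lt_of_le_of_ne (hmono hab.le) (fun h => hp.ne ((hiff _ _).mp h))
      have t1 : Filter.Tendsto (fun ε => μ ε p.1) (nhds 0) (nhds (lam p.1)) := by
        have hc1 : Continuous fun ε : ℝ => lam p.1 + ε * c p.1 := by fun_prop
        have := hc1.tendsto 0
        simpa using this
      have t2 : Filter.Tendsto (fun ε => μ ε p.2) (nhds 0) (nhds (lam p.2)) := by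
        have hc1 : Continuous fun ε : ℝ => lam p.2 + ε * c p.2 := by fun_prop
        have := hc1.tendsto 0
        simpa using this
      exact (t1.eventually_lt t2 hlt).mono fun ε h _ => h
    · exact Filter.Eventually.of_forall fun ε h => absurd h hp
  have hev : ∀ᶠ ε in nhdsWithin (0:ℝ) (Set.Ioi 0), ∀ p : Fin n × Fin n, π p.1 < π p.2 → μ ε p.1 < μ ε p.2 :=
    hev1.filter_mono nhdsWithin_le_nhds
  filter_upwards [hev, self_mem_nhdsWithin] with ε hε hε0
  have hε0' : (0:ℝ) < ε := hε0
  refine ⟨?_, μ ε, ?_, ?_, P, hP, rfl⟩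
  · -- trace
    show (P * diagonal (μ ε) * Pᵀ).trace = 0
    rw [trace_conj P hP]
    simp only [hμ, Finset.sum_add_distrib, ← Finset.mul_sum, hsumc, htrlam, mul_zero, add_zero]
  · -- monotone
    intro x y hxy
    rcases eq_or_lt_of_le (hπmono hxy) with h | h
    · have hl : lam x = lam y := (hiff x y).mpr h
      have hcle : c x ≤ c y := by
        have h2 : πt x ≤ πt y := hπtmono hxy
        simp only [hc]
        have : ((πt x : ℕ) : ℝ) ≤ ((πt y : ℕ) : ℝ) := Nat.cast_le.mpr h2
        linarith
      simp only [hμ, hl]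
      have := mul_le_mul_of_nonneg_left hcle hε0'.le
      linarith
    · exact (hε (x, y) h).le
  · -- iff
    intro x y
    constructor
    · intro hxy
      have hpixy : π x = π y := by
        by_contra hne
        rcases lt_or_gt_of_ne hne with h | h
        · exact absurd hxy (hε (x, y) h).ne
        · exact absurd hxy.symm (hε (y, x) h).ne
      have hl : lam x = lam y := (hiff x y).mpr hpixy
      have hmul : ε * c x = ε * c y := by
        have : lam x + ε * c x = lam y + ε * c y := hxy
        rw [hl] at this
        linarith
      have hcxy : c x = c y := mul_left_cancel₀ hε0'.ne' hmul
      have hcast : ((πt x : ℕ) : ℝ) = ((πt y : ℕ) : ℝ) := by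
        simp only [hc, sub_left_inj] at hcxy
        exact hcxy
      exact Fin.val_injective (Nat.cast_injective hcast)
    · intro hxy
      have hl : lam x = lam y := (hiff x y).mpr (R x y hxy)
      show lam x + ε * c x = lam y + ε * c y
      rw [hl]
      simp only [hc, hxy]


/-- `F(𝔪) ⊆ cl(F(𝔪̃))` iff `𝔪 ≤ 𝔪̃`. -/
theorem face_subset_closure_iff (n L Lt : ℕ)
    (π : Fin n → Fin L) (hπmono : Monotone π) (hπsurj : Function.Surjective π)
    (πt : Fin n → Fin Lt) (hπtmono : Monotone πt) (hπtsurj : Function.Surjective πt) :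
    Face π ⊆ closure (Face πt) ↔ MultLE π πt := by
  constructor
  · intro hsub
    exact multLE_of_refines hπmono hπsurj hπtmono hπtsurj
      (refines_of_subset n L Lt π hπmono πt hsub)
  · intro hle
    obtain ⟨J, hJm, hfac⟩ := multLE_factor hπmono hπtmono hle
    have R : ∀ a b, πt a = πt b → π a = π b := by
      intro a b h
      rw [hfac]
      show J (πt a) = J (πt b)
      rw [h]
    exact subset_of_refines n L Lt π hπmono πt hπtmono R
end

section
/- Let 𝔪 be an eigenvalue multiplicity vector for n, let λ₁ ≤ ⋯ ≤ λ_n be real numbers with Σ λ_a = 0 such that λ_a = λ_b if and only if π(a) = π(b), and let D_λ := Diag(λ₁,…,λ_n) ∈ F(𝔪). Then there exists ε > 0 such that B_ε(D_λ) ∩ F(𝔪) = B_ε(D_λ) ∩ {A·D·Aᵀ : A ∈ SO(n), D a diagonal traceless matrix with D_{aa} = D_{bb} whenever π(a) = π(b), and ‖D − D_λ‖ < ε}, where B_ε(D_λ) is the open ε-ball around D_λ in Sym₀(n) for the norm induced by ⟨·,·⟩ and ‖·‖ is this norm. -/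
open Matrix

/-- The norm induced by the inner product `⟨S₁,S₂⟩ = tr(S₁·S₂)` (Frobenius norm). -/
noncomputable def frobNorm {n : ℕ} (X : Matrix (Fin n) (Fin n) ℝ) : ℝ :=
  Real.sqrt ((X * Xᵀ).trace)

lemma frobNorm_diag {n : ℕ} (d : Fin n → ℝ) :
    frobNorm (Matrix.diagonal d) = Real.sqrt (∑ a, d a ^ 2) := by
  simp [frobNorm, Matrix.diagonal_transpose, Matrix.diagonal_mul_diagonal, Matrix.trace_diagonal,
    sq]

lemma rearr {n : ℕ} (P : Matrix (Fin n) (Fin n) ℝ) (hP : Pᵀ * P = 1)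
    (lam mu : Fin n → ℝ) (hlam : Monotone lam) (hmu : Monotone mu) :
    (P * Matrix.diagonal mu * Pᵀ * Matrix.diagonal lam).trace ≤ ∑ a, lam a * mu a := by
  have hPPt : P * Pᵀ = 1 := mul_eq_one_comm.mp hP
  set f : Matrix (Fin n) (Fin n) ℝ → ℝ := fun Q => ∑ a, ∑ b, lam a * mu b * Q a b with hf
  have hlin : IsLinearMap ℝ f := by
    constructor
    · intro X Y
      simp [hf, mul_add, Finset.sum_add_distrib]
    · intro c X
      simp [hf, Finset.mul_sum, Matrix.smul_apply, smul_eq_mul]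
      congr 1; ext a; congr 1; ext b; ring
  have htr : (P * Matrix.diagonal mu * Pᵀ * Matrix.diagonal lam).trace
      = f (Matrix.of fun a b => P a b ^ 2) := by
    rw [Matrix.trace]
    simp only [Matrix.diag_apply, Matrix.mul_diagonal, hf, Matrix.of_apply]
    rw [← Finset.sum_congr rfl (fun a _ => rfl)]
    congr 1; ext a
    rw [Matrix.mul_apply, Finset.sum_mul]
    congr 1; ext b
    rw [Matrix.mul_diagonal]
    simp [Matrix.transpose_apply]
    ring
  rw [htr]
  have hQ : (Matrix.of fun a b => P a b ^ 2) ∈ doublyStochastic ℝ (Fin n) := by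
    rw [mem_doublyStochastic_iff_sum]
    refine ⟨fun i j => sq_nonneg _, fun i => ?_, fun j => ?_⟩
    · have := congrFun (congrFun hPPt i) i
      simp [Matrix.mul_apply, Matrix.one_apply, Matrix.transpose_apply, sq] at this ⊢
      simpa [sq] using this
    · have := congrFun (congrFun hP j) j
      simp [Matrix.mul_apply, Matrix.one_apply, Matrix.transpose_apply, sq] at this ⊢
      simpa [sq, mul_comm] using this
  have hsub : (doublyStochastic ℝ (Fin n) : Set (Matrix (Fin n) (Fin n) ℝ)) ⊆
      {M | f M ≤ ∑ a, lam a * mu a} := by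
    rw [doublyStochastic_eq_convexHull_permMatrix]
    refine convexHull_min ?_ (convex_halfSpace_le hlin _)
    rintro x ⟨σ, rfl⟩
    have hfσ : f (σ.permMatrix ℝ) = ∑ a, lam a * mu (σ a) := by
      simp only [hf]
      congr 1; ext a
      simp [Equiv.Perm.permMatrix, PEquiv.toMatrix, Equiv.toPEquiv_apply, mul_ite,
        Finset.sum_ite_eq, eq_comm]
    have hmono : Monovary mu lam := hmu.monovary hlam
    have := hmono.sum_comp_perm_mul_le_sum_mul (σ := σ)
    simp only [Set.mem_setOf_eq, hfσ]
    calc ∑ a, lam a * mu (σ a) = ∑ a, mu (σ a) * lam a := by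
          congr 1; ext a; ring
      _ ≤ ∑ a, mu a * lam a := hmono.sum_comp_perm_mul_le_sum_mul
      _ = ∑ a, lam a * mu a := by congr 1; ext a; ring
  exact hsub hQ

lemma perturb {n : ℕ} (P : Matrix (Fin n) (Fin n) ℝ) (hP : Pᵀ * P = 1)
    (lam mu : Fin n → ℝ) (hlam : Monotone lam) (hmu : Monotone mu) :
    frobNorm (Matrix.diagonal mu - Matrix.diagonal lam)
      ≤ frobNorm (P * Matrix.diagonal mu * Pᵀ - Matrix.diagonal lam) := by
  set S := P * Matrix.diagonal mu * Pᵀ with hS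
  have hSsymm : Sᵀ = S := by
    simp [hS, Matrix.transpose_mul, Matrix.diagonal_transpose, Matrix.mul_assoc]
  apply Real.sqrt_le_sqrt
  have hSS : (S * S).trace = ∑ a, mu a * mu a := by
    have h1 : S * S = P * (Matrix.diagonal mu * Matrix.diagonal mu) * Pᵀ := by
      simp only [hS, Matrix.mul_assoc]
      rw [← Matrix.mul_assoc Pᵀ P, hP, Matrix.one_mul]
    rw [h1, Matrix.trace_mul_cycle, ← Matrix.mul_assoc, hP, Matrix.one_mul,
      Matrix.diagonal_mul_diagonal, Matrix.trace_diagonal]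
  have hDD : (Matrix.diagonal lam * Matrix.diagonal lam).trace = ∑ a, lam a * lam a := by
    rw [Matrix.diagonal_mul_diagonal, Matrix.trace_diagonal]
  have hrearr := rearr P hP lam mu hlam hmu
  have hexp1 : ((S - Matrix.diagonal lam) * (S - Matrix.diagonal lam)ᵀ).trace
      = (S * S).trace - 2 * (S * Matrix.diagonal lam).trace
        + (Matrix.diagonal lam * Matrix.diagonal lam).trace := by
    rw [Matrix.transpose_sub, hSsymm, Matrix.diagonal_transpose, Matrix.sub_mul,
      Matrix.mul_sub, Matrix.mul_sub, Matrix.trace_sub, Matrix.trace_sub, Matrix.trace_sub,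
      Matrix.trace_mul_comm (Matrix.diagonal lam) S]
    ring
  have hexp2 : ((Matrix.diagonal mu - Matrix.diagonal lam)
      * (Matrix.diagonal mu - Matrix.diagonal lam)ᵀ).trace
      = ∑ a, mu a * mu a - 2 * ∑ a, lam a * mu a + ∑ a, lam a * lam a := by
    rw [Matrix.diagonal_sub, Matrix.diagonal_transpose, Matrix.diagonal_mul_diagonal,
      Matrix.trace_diagonal]
    simp only [Finset.mul_sum, ← Finset.sum_sub_distrib, ← Finset.sum_add_distrib]
    exact Finset.sum_congr rfl fun a _ => by ring
  rw [hexp1, hexp2, hSS, hDD]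
  have : (S * Matrix.diagonal lam).trace ≤ ∑ a, lam a * mu a := hrearr
  linarith

lemma abs_le_frob {n : ℕ} (lam mu : Fin n → ℝ) (a : Fin n) :
    |mu a - lam a| ≤ frobNorm (Matrix.diagonal mu - Matrix.diagonal lam) := by
  rw [Matrix.diagonal_sub, frobNorm_diag, ← Real.sqrt_sq_eq_abs]
  exact Real.sqrt_le_sqrt (Finset.single_le_sum (f := fun i => (mu i - lam i) ^ 2)
    (fun i _ => sq_nonneg _) (Finset.mem_univ a))

lemma trace_conj_s9 {n : ℕ} (A D : Matrix (Fin n) (Fin n) ℝ) (hA : Aᵀ * A = 1) :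
    (A * D * Aᵀ).trace = D.trace := by
  rw [Matrix.trace_mul_cycle, hA, Matrix.one_mul]

/-- near the diagonal point `D_λ ∈ F(𝔪)`, the face `F(𝔪)` coincides with the
`SO(n)`-saturation of the nearby diagonal traceless matrices with the block pattern of `π`. -/
theorem face_locally_orbit_of_diagonal (n L : ℕ)
    (π : Fin n → Fin L) (hπmono : Monotone π) (hπsurj : Function.Surjective π)
    (lam : Fin n → ℝ) (hlam : Monotone lam) (hlamsum : ∑ a, lam a = 0)
    (hpattern : ∀ a b, lam a = lam b ↔ π a = π b) :
    ∃ ε > (0 : ℝ),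
      {Y : Matrix (Fin n) (Fin n) ℝ | frobNorm (Y - Matrix.diagonal lam) < ε} ∩ Face π =
      {Y : Matrix (Fin n) (Fin n) ℝ | frobNorm (Y - Matrix.diagonal lam) < ε} ∩
        {S | ∃ (A : Matrix (Fin n) (Fin n) ℝ) (μ : Fin n → ℝ),
          Aᵀ * A = 1 ∧ A.det = 1 ∧ (∑ a, μ a = 0) ∧
          (∀ a b, π a = π b → μ a = μ b) ∧
          frobNorm (Matrix.diagonal μ - Matrix.diagonal lam) < ε ∧
          S = A * Matrix.diagonal μ * Aᵀ} := by
  classical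
  set G := Finset.univ.filter (fun p : Fin n × Fin n => lam p.1 ≠ lam p.2) with hGdef
  set ε := if hG : G.Nonempty then (G.inf' hG fun p => |lam p.1 - lam p.2|) / 2 else 1 with hε
  have hεpos : 0 < ε := by
    rw [hε]
    split
    · next hG =>
      have : 0 < G.inf' hG fun p => |lam p.1 - lam p.2| := by
        rw [Finset.lt_inf'_iff]
        intro p hp
        rw [hGdef, Finset.mem_filter] at hp
        exact abs_pos.mpr (sub_ne_zero.mpr hp.2)
      linarith
    · exact one_pos
  have hgap : ∀ a b, lam a ≠ lam b → 2 * ε ≤ |lam a - lam b| := by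
    intro a b hab
    have hmem : (a, b) ∈ G := by
      rw [hGdef, Finset.mem_filter]; exact ⟨Finset.mem_univ _, hab⟩
    have hG : G.Nonempty := ⟨(a, b), hmem⟩
    rw [hε, dif_pos hG]
    have := Finset.inf'_le (fun p : Fin n × Fin n => |lam p.1 - lam p.2|) hmem
    linarith
  refine ⟨ε, hεpos, ?_⟩
  ext S
  simp only [Set.mem_inter_iff, Set.mem_setOf_eq]
  constructor
  · rintro ⟨hball, htr, mu, hmuMono, hmuIff, P, hP, rfl⟩
    refine ⟨hball, ?_⟩
    have hsum : ∑ a, mu a = 0 := by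
      rw [trace_conj_s9 P _ hP, Matrix.trace_diagonal] at htr
      exact htr
    have hfrob : frobNorm (Matrix.diagonal mu - Matrix.diagonal lam) < ε :=
      lt_of_le_of_lt (perturb P hP lam mu hlam hmuMono) hball
    have hdetsq : P.det * P.det = 1 := by
      have := congrArg Matrix.det hP
      rwa [Matrix.det_mul, Matrix.det_transpose, Matrix.det_one] at this
    by_cases hPdet : P.det = 1
    · exact ⟨P, mu, hP, hPdet, hsum, fun a b h => (hmuIff a b).mpr h, hfrob, rfl⟩
    · have hPdet' : P.det = -1 := by
        rcases mul_self_eq_one_iff.mp hdetsq with h | h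
        · exact absurd h hPdet
        · exact h
      have hn : 0 < n := by
        by_contra hn
        have : n = 0 := Nat.eq_zero_of_not_pos hn
        subst this
        have : P.det = 1 := Matrix.det_isEmpty
        exact hPdet this
      set e : Fin n → ℝ := fun a => if a = (⟨0, hn⟩ : Fin n) then -1 else 1 with he
      set E := Matrix.diagonal e with hE
      have hee : ∀ a, e a * e a = 1 := by
        intro a; by_cases h : a = (⟨0, hn⟩ : Fin n) <;> simp [he, h]
      have hEE : E * E = 1 := by
        rw [hE, Matrix.diagonal_mul_diagonal, ← Matrix.diagonal_one,
          show (fun i => e i * e i) = fun _ => (1 : ℝ) from funext hee]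
      have hEt : Eᵀ = E := Matrix.diagonal_transpose e
      have hEdet : E.det = -1 := by
        rw [hE, Matrix.det_diagonal, he]
        rw [Finset.prod_ite_eq' Finset.univ (⟨0, hn⟩ : Fin n) (fun _ => (-1 : ℝ))]
        simp
      refine ⟨P * E, mu, ?_, ?_, hsum, fun a b h => (hmuIff a b).mpr h, hfrob, ?_⟩
      · rw [Matrix.transpose_mul, hEt, Matrix.mul_assoc, ← Matrix.mul_assoc Pᵀ P E, hP,
          Matrix.one_mul, hEE]
      · rw [Matrix.det_mul, hPdet', hEdet]; norm_num
      · have hED : E * Matrix.diagonal mu * E = Matrix.diagonal mu := by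
          rw [hE, Matrix.diagonal_mul_diagonal, Matrix.diagonal_mul_diagonal,
            show (fun i => e i * mu i * e i) = mu from funext fun a => by
              rw [mul_comm (e a) (mu a), mul_assoc, hee a, mul_one]]
        rw [Matrix.transpose_mul, hEt]
        calc P * Matrix.diagonal mu * Pᵀ
            = P * (E * Matrix.diagonal mu * E) * Pᵀ := by rw [hED]
          _ = P * E * Matrix.diagonal mu * (E * Pᵀ) := by
              simp only [Matrix.mul_assoc]
  · rintro ⟨hball, A, mu, hA, hAdet, hsum, hπmu, hmuball, rfl⟩
    have hentry : ∀ a, |mu a - lam a| < ε :=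
      fun a => lt_of_le_of_lt (abs_le_frob lam mu a) hmuball
    have hiff : ∀ a b, mu a = mu b ↔ π a = π b := by
      intro a b
      constructor
      · intro h
        by_contra hπ
        have hlab : lam a ≠ lam b := fun hl => hπ ((hpattern a b).mp hl)
        have h2 := hgap a b hlab
        have h3 : |lam a - lam b| < 2 * ε := by
          calc |lam a - lam b| = |(lam a - mu a) + (mu b - lam b)| := by rw [h]; ring_nf
            _ ≤ |lam a - mu a| + |mu b - lam b| := abs_add_le _ _
            _ < ε + ε := by
                have h4 := hentry a; have h5 := hentry b
                rw [abs_sub_comm] at h4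
                exact add_lt_add h4 h5
            _ = 2 * ε := by ring
        linarith
      · exact hπmu a b
    have hmono : Monotone mu := by
      intro a b hab
      rcases eq_or_ne (π a) (π b) with h | h
      · exact le_of_eq (hπmu a b h)
      · have hlab : lam a ≠ lam b := fun hl => h ((hpattern a b).mp hl)
        have hlt : lam a < lam b := lt_of_le_of_ne (hlam hab) hlab
        have h2 := hgap a b hlab
        rw [abs_sub_comm, abs_of_pos (by linarith)] at h2
        have h4 := abs_lt.mp (hentry a)
        have h5 := abs_lt.mp (hentry b)
        linarith [h4.1, h4.2, h5.1, h5.2]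
    refine ⟨hball, ?_, mu, hmono, hiff, A, hA, rfl⟩
    rw [trace_conj_s9 A _ hA, Matrix.trace_diagonal, hsum]
end

section
/- Let 𝔪 < 𝔪̃ be eigenvalue multiplicity vectors for n, let S₀ ∈ F(𝔪), and let (S_k) be a sequence in F(𝔪̃) with S_k → S₀. If the orthogonal projections P_k of Sym₀(n) onto τ(S_k) (with respect to ⟨·,·⟩) converge to a linear map P, then τ(S₀) ⊆ range(P). (This is Whitney's transversality condition (a) for the pair of adjacent faces (F(𝔪̃), F(𝔪)).) -/
open Matrix

/-- `Sym₀(n)`: symmetric traceless real `n×n` matrices. -/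
def Sym0 (n : ℕ) : Set (Matrix (Fin n) (Fin n) ℝ) := {X | X.IsSymm ∧ X.trace = 0}

/-- The eigenspace of a matrix `S` for the value `μ`. -/
noncomputable def eigSp {n : ℕ} (S : Matrix (Fin n) (Fin n) ℝ) (μ : ℝ) :
    Submodule ℝ (Fin n → ℝ) :=
  Module.End.eigenspace (Matrix.toLin' S) μ

/-- `ν(S)`: symmetric traceless matrices mapping each eigenspace of `S` into itself,
with trace-zero restriction to each eigenspace of `S`. -/
noncomputable def nuSpace {n : ℕ} (S : Matrix (Fin n) (Fin n) ℝ) :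
    Set (Matrix (Fin n) (Fin n) ℝ) :=
  {X | X ∈ Sym0 n ∧ ∀ μ : ℝ,
    ∃ h : ∀ v ∈ eigSp S μ, (Matrix.toLin' X) v ∈ eigSp S μ,
      LinearMap.trace ℝ ↥(eigSp S μ) ((Matrix.toLin' X).restrict h) = 0}

/-- `τ(S)`: the orthogonal complement of `ν(S)` in `Sym₀(n)` with respect to
`⟨S₁,S₂⟩ = tr(S₁·S₂)`. -/
noncomputable def tauSpace {n : ℕ} (S : Matrix (Fin n) (Fin n) ℝ) :
    Set (Matrix (Fin n) (Fin n) ℝ) :=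
  {X | X ∈ Sym0 n ∧ ∀ Y ∈ nuSpace S, (X * Y).trace = 0}

lemma orth_cancel {n : ℕ} {Q : Matrix (Fin n) (Fin n) ℝ} (hQ : Qᵀ * Q = 1)
    (x : Fin n → ℝ) : Q *ᵥ (Qᵀ *ᵥ x) = x := by
  rw [Matrix.mulVec_mulVec, mul_eq_one_comm.mp hQ, Matrix.one_mulVec]

lemma orth_cancel' {n : ℕ} {Q : Matrix (Fin n) (Fin n) ℝ} (hQ : Qᵀ * Q = 1)
    (x : Fin n → ℝ) : Qᵀ *ᵥ (Q *ᵥ x) = x := by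
  rw [Matrix.mulVec_mulVec, hQ, Matrix.one_mulVec]

lemma eigSp_mem_iff {n : ℕ} {Q : Matrix (Fin n) (Fin n) ℝ} (hQ : Qᵀ * Q = 1)
    (d : Fin n → ℝ) (c : ℝ) (v : Fin n → ℝ) :
    v ∈ eigSp (Q * Matrix.diagonal d * Qᵀ) c ↔ ∀ b, d b ≠ c → (Qᵀ *ᵥ v) b = 0 := by
  rw [eigSp, Module.End.mem_eigenspace_iff, Matrix.toLin'_apply]
  have key : (Q * Matrix.diagonal d * Qᵀ) *ᵥ v = c • v ↔
      Matrix.diagonal d *ᵥ (Qᵀ *ᵥ v) = c • (Qᵀ *ᵥ v) := by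
    constructor
    · intro h
      have := congrArg (fun x => Qᵀ *ᵥ x) h
      simpa [Matrix.mulVec_mulVec, ← Matrix.mul_assoc, hQ, Matrix.mulVec_smul] using this
    · intro h
      have := congrArg (fun x => Q *ᵥ x) h
      simp only [Matrix.mulVec_mulVec, Matrix.mulVec_smul] at this ⊢
      rw [mul_eq_one_comm.mp hQ, Matrix.one_mulVec, ← Matrix.mul_assoc] at this
      exact this
  rw [key]
  constructor
  · intro h b hb
    have := congrFun h b
    simp [Matrix.mulVec_diagonal] at this
    exact this.resolve_left hb
  · intro h
    funext b
    by_cases hb : d b = c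
    · simp [Matrix.mulVec_diagonal, hb]
    · simp [Matrix.mulVec_diagonal, h b hb]

lemma sum_single_support {n : ℕ} (d : Fin n → ℝ) (c : ℝ) (g : Fin n → ℝ)
    (hg : ∀ i, d i ≠ c → g i = 0) :
    ∑ b : {a : Fin n // d a = c}, g b.1 • (Pi.single b.1 1 : Fin n → ℝ) = g := by
  have h1 : ∀ a : Fin n, g a • (Pi.single a 1 : Fin n → ℝ) = Pi.single a (g a) := by
    intro a; funext i
    by_cases hi : i = a <;> simp [Pi.single_apply, hi]
  have h2 : ∑ b : {a : Fin n // d a = c}, g b.1 • (Pi.single b.1 1 : Fin n → ℝ)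
      = ∑ b ∈ Finset.univ.filter (fun a => d a = c), (Pi.single b (g b) : Fin n → ℝ) := by
    rw [← Finset.sum_subtype (Finset.univ.filter (fun a => d a = c))
      (by intro x; simp) (fun b => g b • (Pi.single b 1 : Fin n → ℝ))]
    exact Finset.sum_congr rfl fun b _ => h1 b
  rw [h2]
  rw [Finset.sum_filter]
  have h3 : ∀ a : Fin n, (if d a = c then (Pi.single a (g a) : Fin n → ℝ) else 0)
      = (Pi.single a (g a) : Fin n → ℝ) := by
    intro a
    by_cases ha : d a = c
    · simp [ha]
    · simp [ha, hg a ha]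
  rw [Finset.sum_congr rfl fun a _ => h3 a]
  exact Finset.univ_sum_single g

lemma mulVec_sum_smul {n : ℕ} (Q : Matrix (Fin n) (Fin n) ℝ) {t : Type*} [Fintype t]
    (g : t → ℝ) (s : t → Fin n → ℝ) :
    Q *ᵥ (∑ x, g x • s x) = ∑ x, g x • (Q *ᵥ s x) := by
  have h0 : Q *ᵥ (∑ x, g x • s x) = Q.mulVecLin (∑ x, g x • s x) := rfl
  rw [h0, map_sum]
  exact Finset.sum_congr rfl fun x _ => by rw [_root_.map_smul]; rfl

lemma trace_restrict_eq {n : ℕ} {Q : Matrix (Fin n) (Fin n) ℝ} (hQ : Qᵀ * Q = 1)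
    (d : Fin n → ℝ) (c : ℝ) (Y : Matrix (Fin n) (Fin n) ℝ)
    (hinv : ∀ v ∈ eigSp (Q * Matrix.diagonal d * Qᵀ) c,
      (Matrix.toLin' Y) v ∈ eigSp (Q * Matrix.diagonal d * Qᵀ) c) :
    LinearMap.trace ℝ ↥(eigSp (Q * Matrix.diagonal d * Qᵀ) c) ((Matrix.toLin' Y).restrict hinv)
      = ∑ a ∈ Finset.univ.filter (fun a => d a = c), (Qᵀ * Y * Q) a a := by
  classical
  set Z := Qᵀ * Y * Q with hZ
  -- the basis vectors
  have emem : ∀ a : {a : Fin n // d a = c},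
      Q *ᵥ (Pi.single a.1 1 : Fin n → ℝ) ∈ eigSp (Q * Matrix.diagonal d * Qᵀ) c := by
    intro a
    rw [eigSp_mem_iff hQ]
    intro b hb
    rw [orth_cancel' hQ]
    have : b ≠ a.1 := fun hba => hb (hba ▸ a.2)
    simp [Pi.single_apply, this]
  set e : {a : Fin n // d a = c} → ↥(eigSp (Q * Matrix.diagonal d * Qᵀ) c) :=
    fun a => ⟨Q *ᵥ (Pi.single a.1 1 : Fin n → ℝ), emem a⟩ with he
  -- linear independence
  have hker : LinearMap.ker (Matrix.mulVecLin Q) = ⊥ := by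
    rw [LinearMap.ker_eq_bot]
    intro x y hxy
    have := congrArg (fun z => Qᵀ *ᵥ z) hxy
    simpa [orth_cancel' hQ] using this
  have li0 : LinearIndependent ℝ
      (fun a : {a : Fin n // d a = c} => (Pi.single a.1 1 : Fin n → ℝ)) := by
    have := (Pi.basisFun ℝ (Fin n)).linearIndependent
    have h2 := this.comp (fun a : {a : Fin n // d a = c} => a.1) Subtype.val_injective
    convert h2 using 1
    funext a
    simp [Pi.basisFun_apply]
  have li1 : LinearIndependent ℝ
      (fun a : {a : Fin n // d a = c} => Q *ᵥ (Pi.single a.1 1 : Fin n → ℝ)) := by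
    have := li0.map' (Matrix.mulVecLin Q) hker
    exact this
  have li : LinearIndependent ℝ e :=
    LinearIndependent.of_comp (eigSp (Q * Matrix.diagonal d * Qᵀ) c).subtype
      (by convert li1 using 1; funext a; rfl)
  -- spanning
  have hspan : ⊤ ≤ Submodule.span ℝ (Set.range e) := by
    rintro ⟨v, hv⟩ -
    have hsupp : ∀ i, d i ≠ c → (Qᵀ *ᵥ v) i = 0 := (eigSp_mem_iff hQ d c v).mp hv
    have hvsum : (⟨v, hv⟩ : ↥(eigSp (Q * Matrix.diagonal d * Qᵀ) c))
        = ∑ b : {a : Fin n // d a = c}, (Qᵀ *ᵥ v) b.1 • e b := by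
      apply Subtype.ext
      push_cast
      rw [← mulVec_sum_smul Q (fun x : {a : Fin n // d a = c} => (Qᵀ *ᵥ v) x.1)
        (fun x => (Pi.single x.1 1 : Fin n → ℝ))]
      rw [sum_single_support d c _ hsupp, orth_cancel hQ]
    rw [hvsum]
    exact Submodule.sum_mem _ fun b _ =>
      Submodule.smul_mem _ _ (Submodule.subset_span ⟨b, rfl⟩)
  set B := Module.Basis.mk li hspan with hB
  have Bapply : ∀ a, (B a : Fin n → ℝ) = Q *ᵥ (Pi.single a.1 1 : Fin n → ℝ) := by
    intro a; rw [hB, Module.Basis.mk_apply]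
  -- image of basis vectors
  have fB : ∀ a : {a : Fin n // d a = c}, ((Matrix.toLin' Y).restrict hinv) (B a)
      = ∑ b : {a : Fin n // d a = c}, Z b.1 a.1 • B b := by
    intro a
    have hu : (Y *ᵥ (Q *ᵥ (Pi.single a.1 1 : Fin n → ℝ)))
        ∈ eigSp (Q * Matrix.diagonal d * Qᵀ) c := by
      have := hinv _ (emem a)
      simpa [Matrix.toLin'_apply] using this
    have hZcol : (Qᵀ *ᵥ (Y *ᵥ (Q *ᵥ (Pi.single a.1 1 : Fin n → ℝ))))
        = fun i => Z i a.1 := by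
      rw [Matrix.mulVec_mulVec, Matrix.mulVec_mulVec]
      funext i
      simp [Matrix.mulVec_single, hZ, Matrix.mul_assoc]
    have hsupp2 : ∀ i, d i ≠ c → Z i a.1 = 0 := by
      intro i hi
      have := (eigSp_mem_iff hQ d c _).mp hu i hi
      rw [hZcol] at this
      exact this
    apply Subtype.ext
    have lhs : (((Matrix.toLin' Y).restrict hinv) (B a) : Fin n → ℝ)
        = Y *ᵥ (Q *ᵥ (Pi.single a.1 1 : Fin n → ℝ)) := by
      rw [LinearMap.restrict_apply]
      show Matrix.toLin' Y ↑(B a) = _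
      rw [Matrix.toLin'_apply, Bapply]
    rw [lhs]
    have rhs : ((∑ b : {a : Fin n // d a = c}, Z b.1 a.1 • B b :
        ↥(eigSp (Q * Matrix.diagonal d * Qᵀ) c)) : Fin n → ℝ)
        = Q *ᵥ (∑ b : {a : Fin n // d a = c}, Z b.1 a.1 • (Pi.single b.1 1 : Fin n → ℝ)) := by
      push_cast
      rw [mulVec_sum_smul Q (fun b : {a : Fin n // d a = c} => Z b.1 a.1)
        (fun b => (Pi.single b.1 1 : Fin n → ℝ))]
      exact Finset.sum_congr rfl fun b _ => by rw [Bapply]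
    rw [rhs, sum_single_support d c _ hsupp2, ← hZcol, orth_cancel hQ]
  -- compute the trace
  rw [LinearMap.trace_eq_matrix_trace ℝ B]
  have diag : ∀ a : {a : Fin n // d a = c},
      (LinearMap.toMatrix B B ((Matrix.toLin' Y).restrict hinv)) a a = Z a.1 a.1 := by
    intro a
    rw [LinearMap.toMatrix_apply, fB a, map_sum]
    simp only [_root_.map_smul, Module.Basis.repr_self]
    rw [Finsupp.coe_finset_sum, Finset.sum_apply]
    have hterm : ∀ c1 : {a : Fin n // d a = c},
        (Z c1.1 a.1 • Finsupp.single c1 (1:ℝ)) a = if c1 = a then Z c1.1 a.1 else 0 := by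
      intro c1
      rw [Finsupp.smul_apply, Finsupp.single_apply]
      split <;> simp_all
    rw [Finset.sum_congr rfl fun c1 _ => hterm c1, Finset.sum_ite_eq' Finset.univ a]
    simp
  rw [Matrix.trace]
  calc ∑ a, (LinearMap.toMatrix B B ((Matrix.toLin' Y).restrict hinv)).diag a
      = ∑ a : {a : Fin n // d a = c}, Z a.1 a.1 :=
        Finset.sum_congr rfl fun a _ => diag a
    _ = ∑ a ∈ Finset.univ.filter (fun a => d a = c), Z a a :=
        (Finset.sum_subtype (p := fun a => d a = c)
          (Finset.univ.filter (fun a => d a = c)) (fun x => by simp) (fun a => Z a a)).symm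

/-! ### trace helpers -/

lemma trace_mul_entries {n : ℕ} (M N : Matrix (Fin n) (Fin n) ℝ) :
    (M * N).trace = ∑ a, ∑ b, M a b * N b a := by
  simp [Matrix.trace, Matrix.diag, Matrix.mul_apply]

lemma conj_cancel {n : ℕ} {Q : Matrix (Fin n) (Fin n) ℝ} (hQ : Qᵀ * Q = 1)
    (M : Matrix (Fin n) (Fin n) ℝ) : Qᵀ * (Q * M * Qᵀ) * Q = M := by
  have hQ' : Q * Qᵀ = 1 := mul_eq_one_comm.mp hQ
  calc Qᵀ * (Q * M * Qᵀ) * Q = (Qᵀ * Q) * M * (Qᵀ * Q) := by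
        simp only [Matrix.mul_assoc]
    _ = M := by rw [hQ, Matrix.one_mul, Matrix.mul_one]

lemma conj_cancel' {n : ℕ} {Q : Matrix (Fin n) (Fin n) ℝ} (hQ : Qᵀ * Q = 1)
    (M : Matrix (Fin n) (Fin n) ℝ) : Q * (Qᵀ * M * Q) * Qᵀ = M := by
  have hQ' : Q * Qᵀ = 1 := mul_eq_one_comm.mp hQ
  calc Q * (Qᵀ * M * Q) * Qᵀ = (Q * Qᵀ) * M * (Q * Qᵀ) := by
        simp only [Matrix.mul_assoc]
    _ = M := by rw [hQ', Matrix.one_mul, Matrix.mul_one]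

lemma trace_conj_s12 {n : ℕ} {Q : Matrix (Fin n) (Fin n) ℝ} (hQ : Qᵀ * Q = 1)
    (M : Matrix (Fin n) (Fin n) ℝ) : (Q * M * Qᵀ).trace = M.trace := by
  have hQ' : Q * Qᵀ = 1 := mul_eq_one_comm.mp hQ
  rw [Matrix.trace_mul_comm (Q * M) Qᵀ, ← Matrix.mul_assoc, hQ, Matrix.one_mul]

lemma trace_shift {n : ℕ} {Q : Matrix (Fin n) (Fin n) ℝ} (hQ : Qᵀ * Q = 1)
    (A W : Matrix (Fin n) (Fin n) ℝ) :
    (A * (Q * W * Qᵀ)).trace = ((Qᵀ * A * Q) * W).trace := by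
  rw [show A * (Q * W * Qᵀ) = (A * Q * W) * Qᵀ by simp only [Matrix.mul_assoc],
    Matrix.trace_mul_comm (A * Q * W) Qᵀ]
  simp only [Matrix.mul_assoc]

/-! ### fiberwise sum helpers -/

lemma pair_trace_zero {n Lt : ℕ} (πt : Fin n → Fin Lt)
    (U V : Matrix (Fin n) (Fin n) ℝ)
    (hU1 : ∀ a b, a ≠ b → πt a = πt b → U a b = 0)
    (hU2 : ∀ a b, πt a = πt b → U a a = U b b)
    (hV1 : ∀ a b, πt a ≠ πt b → V a b = 0)
    (hV2 : ∀ j, ∑ a ∈ Finset.univ.filter (fun a => πt a = j), V a a = 0) :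
    (U * V).trace = 0 := by
  classical
  rw [trace_mul_entries]
  have hterm : ∀ a b : Fin n, U a b * V b a = if b = a then U a a * V a a else 0 := by
    intro a b
    by_cases hab : b = a
    · subst hab; simp
    · rw [if_neg hab]
      by_cases hπ : πt a = πt b
      · rw [hU1 a b (fun h => hab h.symm) hπ, zero_mul]
      · rw [hV1 b a (fun h => hπ h.symm), mul_zero]
  have hred : ∑ a, ∑ b, U a b * V b a = ∑ a, U a a * V a a := by
    refine Finset.sum_congr rfl fun a _ => ?_
    rw [Finset.sum_congr rfl fun b _ => hterm a b, Finset.sum_ite_eq' Finset.univ a]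
    simp
  rw [hred, ← Finset.sum_fiberwise_of_maps_to (fun a _ => Finset.mem_univ (πt a))
    (fun a => U a a * V a a)]
  refine Finset.sum_eq_zero fun j _ => ?_
  rcases Finset.eq_empty_or_nonempty (Finset.univ.filter fun a => πt a = j) with he | hne
  · rw [he, Finset.sum_empty]
  · obtain ⟨a₀, ha₀⟩ := hne
    have ha₀' : πt a₀ = j := (Finset.mem_filter.mp ha₀).2
    calc ∑ a ∈ Finset.univ.filter (fun a => πt a = j), U a a * V a a
        = ∑ a ∈ Finset.univ.filter (fun a => πt a = j), U a₀ a₀ * V a a := by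
          refine Finset.sum_congr rfl fun a ha => ?_
          have : πt a = πt a₀ := by
            rw [(Finset.mem_filter.mp ha).2, ha₀']
          rw [hU2 a a₀ this]
      _ = U a₀ a₀ * ∑ a ∈ Finset.univ.filter (fun a => πt a = j), V a a :=
          (Finset.mul_sum _ _ _).symm
      _ = 0 := by rw [hV2 j, mul_zero]

lemma levelsum {n Lt : ℕ} (πt : Fin n → Fin Lt) (μ : Fin n → ℝ) (g : Fin n → ℝ)
    (h1 : ∀ a b, πt a = πt b → μ a = μ b)
    (h2 : ∀ j, ∑ a ∈ Finset.univ.filter (fun a => πt a = j), g a = 0) (c : ℝ) :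
    ∑ a ∈ Finset.univ.filter (fun a => μ a = c), g a = 0 := by
  classical
  rw [← Finset.sum_fiberwise_of_maps_to
    (fun (a : Fin n) (_ : a ∈ Finset.univ.filter (fun a => μ a = c)) => Finset.mem_univ (πt a)) g]
  refine Finset.sum_eq_zero fun j _ => ?_
  rcases Finset.eq_empty_or_nonempty
    (((Finset.univ.filter (fun a => μ a = c))).filter fun a => πt a = j) with he | hne
  · rw [he, Finset.sum_empty]
  · obtain ⟨a₀, ha₀⟩ := hne
    have h₀ := Finset.mem_filter.mp ha₀
    have hμ₀ : μ a₀ = c := (Finset.mem_filter.mp h₀.1).2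
    have hπ₀ : πt a₀ = j := h₀.2
    have hset : ((Finset.univ.filter (fun a => μ a = c))).filter (fun a => πt a = j)
        = Finset.univ.filter (fun a => πt a = j) := by
      ext a
      constructor
      · intro hx; exact Finset.mem_filter.mpr ⟨Finset.mem_univ a, (Finset.mem_filter.mp hx).2⟩
      · intro hx
        have h : πt a = j := (Finset.mem_filter.mp hx).2
        exact Finset.mem_filter.mpr ⟨Finset.mem_filter.mpr ⟨Finset.mem_univ a,
          by rw [h1 a a₀ (by rw [h, hπ₀]), hμ₀]⟩, h⟩
    rw [hset]
    exact h2 j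

/-! ### decoding and encoding `nuSpace` via a diagonalization -/

lemma nu_decode {n : ℕ} {Q : Matrix (Fin n) (Fin n) ℝ} (hQ : Qᵀ * Q = 1)
    (lam : Fin n → ℝ) {Y : Matrix (Fin n) (Fin n) ℝ}
    (hY : Y ∈ nuSpace (Q * Matrix.diagonal lam * Qᵀ)) :
    (∀ a b, lam a ≠ lam b → (Qᵀ * Y * Q) a b = 0) ∧
    (∀ c, ∑ a ∈ Finset.univ.filter (fun a => lam a = c), (Qᵀ * Y * Q) a a = 0) := by
  constructor
  · intro a b hab
    obtain ⟨hinv, -⟩ := hY.2 (lam b)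
    have hv : Q *ᵥ (Pi.single b 1 : Fin n → ℝ)
        ∈ eigSp (Q * Matrix.diagonal lam * Qᵀ) (lam b) := by
      rw [eigSp_mem_iff hQ]
      intro i hi
      rw [orth_cancel' hQ]
      have : i ≠ b := fun h => hi (by rw [h])
      simp [Pi.single_apply, this]
    have hm := hinv _ hv
    rw [Matrix.toLin'_apply] at hm
    have hz := (eigSp_mem_iff hQ lam (lam b) _).mp hm a hab
    rw [Matrix.mulVec_mulVec, Matrix.mulVec_mulVec] at hz
    simpa [Matrix.mulVec_single, Matrix.mul_assoc] using hz
  · intro c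
    obtain ⟨hinv, htr⟩ := hY.2 c
    rw [← trace_restrict_eq hQ lam c Y hinv]
    exact htr

lemma nu_encode {n : ℕ} {Q : Matrix (Fin n) (Fin n) ℝ} (hQ : Qᵀ * Q = 1)
    (lam : Fin n → ℝ) (Z : Matrix (Fin n) (Fin n) ℝ)
    (hZ1 : ∀ a b, lam a ≠ lam b → Z a b = 0)
    (hZ2 : ∀ c, ∑ a ∈ Finset.univ.filter (fun a => lam a = c), Z a a = 0)
    (hsym : (Q * Z * Qᵀ).IsSymm) (htr : (Q * Z * Qᵀ).trace = 0) :
    Q * Z * Qᵀ ∈ nuSpace (Q * Matrix.diagonal lam * Qᵀ) := by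
  refine ⟨⟨hsym, htr⟩, fun c => ?_⟩
  have hinv : ∀ v ∈ eigSp (Q * Matrix.diagonal lam * Qᵀ) c,
      (Matrix.toLin' (Q * Z * Qᵀ)) v ∈ eigSp (Q * Matrix.diagonal lam * Qᵀ) c := by
    intro v hv
    rw [Matrix.toLin'_apply]
    rw [eigSp_mem_iff hQ] at hv ⊢
    intro b hb
    have hw : Qᵀ *ᵥ ((Q * Z * Qᵀ) *ᵥ v) = Z *ᵥ (Qᵀ *ᵥ v) := by
      rw [Matrix.mulVec_mulVec]
      have h1 : Qᵀ * (Q * Z * Qᵀ) = Z * Qᵀ := by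
        rw [← Matrix.mul_assoc, ← Matrix.mul_assoc, hQ, Matrix.one_mul]
      rw [h1, ← Matrix.mulVec_mulVec]
    rw [hw]
    show ∑ a, Z b a * (Qᵀ *ᵥ v) a = 0
    refine Finset.sum_eq_zero fun a _ => ?_
    by_cases ha : lam a = c
    · rw [hZ1 b a (by rw [ha]; exact hb), zero_mul]
    · rw [hv a ha, mul_zero]
  refine ⟨hinv, ?_⟩
  rw [trace_restrict_eq hQ lam c _ hinv, conj_cancel hQ]
  exact hZ2 c

/-- Key step: any symmetric traceless matrix `A` orthogonal to `tauSpace S` (for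
`S = Q diag(lam) Qᵀ`) has conjugate `W = Qᵀ A Q` block-diagonal with traceless blocks. -/

lemma Wpattern {n Lt : ℕ} (πt : Fin n → Fin Lt) (hπtsurj : Function.Surjective πt)
    {Q : Matrix (Fin n) (Fin n) ℝ} (hQ : Qᵀ * Q = 1) (lam : Fin n → ℝ)
    (hiff : ∀ a b, lam a = lam b ↔ πt a = πt b)
    (A : Matrix (Fin n) (Fin n) ℝ) (hAs : Aᵀ = A) (hAtr : A.trace = 0)
    (hA : ∀ Yt ∈ tauSpace (Q * Matrix.diagonal lam * Qᵀ), (A * Yt).trace = 0) :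
    (∀ a b, πt a ≠ πt b → (Qᵀ * A * Q) a b = 0) ∧
    (∀ j, ∑ a ∈ Finset.univ.filter (fun a => πt a = j), (Qᵀ * A * Q) a a = 0) := by
  classical
  set W := Qᵀ * A * Q with hW
  have hWs : Wᵀ = W := by
    rw [hW, Matrix.transpose_mul, Matrix.transpose_mul, Matrix.transpose_transpose, hAs,
      Matrix.mul_assoc]
  have hWtr : W.trace = 0 := by
    have : W.trace = A.trace := by
      rw [hW, Matrix.trace_mul_comm (Qᵀ * A) Q, ← Matrix.mul_assoc,
        mul_eq_one_comm.mp hQ, Matrix.one_mul]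
    rw [this, hAtr]
  -- block means
  set m : Fin Lt → ℕ := fun j => (Finset.univ.filter fun a => πt a = j).card with hm
  have hmpos : ∀ j, 0 < m j := by
    intro j
    obtain ⟨a, ha⟩ := hπtsurj j
    exact Finset.card_pos.mpr ⟨a, Finset.mem_filter.mpr ⟨Finset.mem_univ a, ha⟩⟩
  set mean : Fin Lt → ℝ :=
    fun j => (∑ a ∈ Finset.univ.filter (fun a => πt a = j), W a a) / (m j) with hmean
  have hmeansum : ∀ j, ∑ a ∈ Finset.univ.filter (fun a => πt a = j), (W a a - mean j) = 0 := by
    intro j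
    rw [Finset.sum_sub_distrib, Finset.sum_const, hmean, nsmul_eq_mul]
    have : (m j : ℝ) ≠ 0 := Nat.cast_ne_zero.mpr (hmpos j).ne'
    change _ - (m j : ℝ) * _ = 0
    field_simp
    simp
  set Wt : Matrix (Fin n) (Fin n) ℝ :=
    Matrix.of fun a b => if πt a = πt b then (if a = b then mean (πt a) else 0) else W a b
    with hWt
  have hWtapp : ∀ a b, Wt a b = if πt a = πt b then (if a = b then mean (πt a) else 0) else W a b :=
    fun a b => rfl
  have hWts : Wtᵀ = Wt := by
    ext a b
    rw [Matrix.transpose_apply, hWtapp, hWtapp]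
    by_cases h1 : πt a = πt b
    · rw [if_pos h1.symm, if_pos h1]
      by_cases h2 : a = b
      · rw [if_pos h2.symm, if_pos h2, h1]
      · rw [if_neg (fun h => h2 h.symm), if_neg h2]
    · rw [if_neg (fun h => h1 h.symm), if_neg h1]
      exact congrFun (congrFun hWs b) a ▸ (by rw [← hWs, Matrix.transpose_apply])
  -- Wt has the "U" pattern
  have hU1 : ∀ a b, a ≠ b → πt a = πt b → Wt a b = 0 := by
    intro a b hab hπ; rw [hWtapp, if_pos hπ, if_neg hab]
  have hU2 : ∀ a b, πt a = πt b → Wt a a = Wt b b := by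
    intro a b hπ; rw [hWtapp, hWtapp, if_pos rfl, if_pos rfl, if_pos rfl, if_pos rfl, hπ]
  have hWtdiag : ∀ a, Wt a a = mean (πt a) := by
    intro a; rw [hWtapp, if_pos rfl, if_pos rfl]
  -- Y := Q * Wt * Qᵀ belongs to tauSpace
  have hYtau : Q * Wt * Qᵀ ∈ tauSpace (Q * Matrix.diagonal lam * Qᵀ) := by
    constructor
    · constructor
      · show (Q * Wt * Qᵀ)ᵀ = Q * Wt * Qᵀ
        rw [Matrix.transpose_mul, Matrix.transpose_mul, Matrix.transpose_transpose, hWts,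
          Matrix.mul_assoc]
      · rw [trace_conj_s12 hQ, Matrix.trace]
        have : ∑ a, Wt.diag a = ∑ a, mean (πt a) :=
          Finset.sum_congr rfl fun a _ => hWtdiag a
        rw [this, ← Finset.sum_fiberwise_of_maps_to (fun a _ => Finset.mem_univ (πt a))
          (fun a => mean (πt a))]
        have : ∀ j, ∑ a ∈ Finset.univ.filter (fun a => πt a = j), mean (πt a)
            = ∑ a ∈ Finset.univ.filter (fun a => πt a = j), W a a := by
          intro j
          have h0 := hmeansum j
          rw [Finset.sum_sub_distrib, sub_eq_zero] at h0
          rw [Finset.sum_congr rfl fun a (ha : a ∈ Finset.univ.filter (fun a => πt a = j)) =>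
            (by rw [(Finset.mem_filter.mp ha).2] : mean (πt a) = mean j)]
          exact h0.symm
        rw [Finset.sum_congr rfl fun j _ => this j,
          Finset.sum_fiberwise_of_maps_to (fun a _ => Finset.mem_univ (πt a)) (fun a => W a a)]
        exact hWtr
    · intro Y hY
      obtain ⟨hY1, hY2⟩ := nu_decode hQ lam hY
      rw [Matrix.trace_mul_comm, trace_shift hQ, Matrix.trace_mul_comm]
      refine pair_trace_zero πt Wt (Qᵀ * Y * Q) hU1 hU2 ?_ ?_
      · intro a b hab
        exact hY1 a b (fun h => hab ((hiff a b).mp h))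
      · intro j
        obtain ⟨a₀, ha₀⟩ := hπtsurj j
        have hset : Finset.univ.filter (fun a => πt a = j)
            = Finset.univ.filter (fun a => lam a = lam a₀) := by
          ext a
          simp only [Finset.mem_filter, Finset.mem_univ, true_and]
          rw [hiff a a₀, ha₀]
        rw [hset]
        exact hY2 (lam a₀)
  -- orthogonality gives trace (W * Wt) = 0
  have h0 : (W * Wt).trace = 0 := by
    have := hA _ hYtau
    rw [trace_shift hQ] at this
    exact this
  -- trace (Wt * (W - Wt)) = 0 by the pattern pairing
  have h1 : (Wt * (W - Wt)).trace = 0 := by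
    refine pair_trace_zero πt Wt (W - Wt) hU1 hU2 ?_ ?_
    · intro a b hab
      rw [Matrix.sub_apply, hWtapp, if_neg hab, sub_self]
    · intro j
      have := hmeansum j
      rw [← this]
      refine Finset.sum_congr rfl fun a ha => ?_
      rw [Matrix.sub_apply, hWtdiag, (Finset.mem_filter.mp ha).2]
  -- hence trace (Wt * Wt) = 0 and Wt = 0
  have h2 : (Wt * Wt).trace = 0 := by
    have hexp : Wt * (W - Wt) = Wt * W - Wt * Wt := by rw [Matrix.mul_sub]
    rw [hexp, Matrix.trace_sub, Matrix.trace_mul_comm Wt W, h0] at h1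
    linarith
  have hWt0 : ∀ a b, Wt a b = 0 := by
    intro a b
    have hsq : (Wt * Wt).trace = ∑ p : Fin n × Fin n, (Wt p.1 p.2)^2 := by
      rw [trace_mul_entries, Fintype.sum_prod_type]
      refine Finset.sum_congr rfl fun a' _ => Finset.sum_congr rfl fun b' _ => ?_
      have heq : Wt b' a' = Wt a' b' := by
        conv_lhs => rw [← hWts, Matrix.transpose_apply]
      rw [heq]; ring
    have hall : ∑ p : Fin n × Fin n, (Wt p.1 p.2)^2 = 0 := by rw [← hsq, h2]
    have := (Finset.sum_eq_zero_iff_of_nonneg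
      (fun p _ => sq_nonneg (Wt p.1 p.2))).mp hall (a, b) (Finset.mem_univ _)
    exact sq_eq_zero_iff.mp this
  constructor
  · intro a b hab
    have he : W a b = Wt a b := by rw [hWtapp, if_neg hab]
    rw [he, hWt0]
  · intro j
    obtain ⟨a₀, ha₀⟩ := hπtsurj j
    have hmean0 : mean j = 0 := by
      have h4 := hWt0 a₀ a₀
      rw [hWtdiag, ha₀] at h4
      exact h4
    have h3 := hmeansum j
    rw [hmean0] at h3
    simpa using h3

/-! ### small topology/compactness helpers -/

lemma entry_tendsto' {n : ℕ} {u : ℕ → Matrix (Fin n) (Fin n) ℝ} {A : Matrix (Fin n) (Fin n) ℝ}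
    (h : Filter.Tendsto u Filter.atTop (nhds A)) (a b : Fin n) :
    Filter.Tendsto (fun k => u k a b) Filter.atTop (nhds (A a b)) := by
  have hc : Continuous (fun M : Matrix (Fin n) (Fin n) ℝ => M a b) :=
    (continuous_apply b).comp (continuous_apply a)
  exact (hc.continuousAt.tendsto).comp h

lemma matrix_tendsto_of_entries {n : ℕ} {u : ℕ → Matrix (Fin n) (Fin n) ℝ}
    {A : Matrix (Fin n) (Fin n) ℝ}
    (h : ∀ a b, Filter.Tendsto (fun k => u k a b) Filter.atTop (nhds (A a b))) :
    Filter.Tendsto u Filter.atTop (nhds A) := by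
  refine tendsto_pi_nhds.mpr ?_
  intro a
  rw [tendsto_pi_nhds]
  exact h a

lemma mul_tendsto {n : ℕ} {u v : ℕ → Matrix (Fin n) (Fin n) ℝ}
    {A B : Matrix (Fin n) (Fin n) ℝ}
    (hu : Filter.Tendsto u Filter.atTop (nhds A))
    (hv : Filter.Tendsto v Filter.atTop (nhds B)) :
    Filter.Tendsto (fun j => u j * v j) Filter.atTop (nhds (A * B)) := by
  refine matrix_tendsto_of_entries fun a b => ?_
  simp only [Matrix.mul_apply]
  exact tendsto_finset_sum _ fun c _ => (entry_tendsto' hu a c).mul (entry_tendsto' hv c b)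

lemma transpose_tendsto {n : ℕ} {u : ℕ → Matrix (Fin n) (Fin n) ℝ}
    {A : Matrix (Fin n) (Fin n) ℝ}
    (hu : Filter.Tendsto u Filter.atTop (nhds A)) :
    Filter.Tendsto (fun j => (u j)ᵀ) Filter.atTop (nhds Aᵀ) := by
  refine matrix_tendsto_of_entries fun a b => ?_
  simp only [Matrix.transpose_apply]
  exact entry_tendsto' hu b a

lemma conj3_tendsto {n : ℕ} (u v : ℕ → Matrix (Fin n) (Fin n) ℝ)
    (Au Av : Matrix (Fin n) (Fin n) ℝ)
    (hu : Filter.Tendsto u Filter.atTop (nhds Au))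
    (hv : Filter.Tendsto v Filter.atTop (nhds Av)) :
    Filter.Tendsto (fun j => (u j)ᵀ * v j * (u j)) Filter.atTop (nhds (Auᵀ * Av * Au)) :=
  mul_tendsto (mul_tendsto (transpose_tendsto hu) hv) hu

lemma trace_tendsto {n : ℕ} {u : ℕ → Matrix (Fin n) (Fin n) ℝ} {Au : Matrix (Fin n) (Fin n) ℝ}
    (hu : Filter.Tendsto u Filter.atTop (nhds Au)) :
    Filter.Tendsto (fun j => (u j).trace) Filter.atTop (nhds (Au.trace)) := by
  simp only [Matrix.trace, Matrix.diag]
  exact tendsto_finset_sum _ fun a _ => entry_tendsto' hu a a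

lemma trace_mul_tendsto {n : ℕ} (X : Matrix (Fin n) (Fin n) ℝ)
    {u : ℕ → Matrix (Fin n) (Fin n) ℝ} {Au : Matrix (Fin n) (Fin n) ℝ}
    (hu : Filter.Tendsto u Filter.atTop (nhds Au)) :
    Filter.Tendsto (fun j => ((u j) * X).trace) Filter.atTop (nhds ((Au * X).trace)) :=
  trace_tendsto (mul_tendsto hu tendsto_const_nhds)

lemma entry_tendsto {n : ℕ} {u : ℕ → Matrix (Fin n) (Fin n) ℝ} {A : Matrix (Fin n) (Fin n) ℝ}
    (h : Filter.Tendsto u Filter.atTop (nhds A)) (a b : Fin n) :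
    Filter.Tendsto (fun k => u k a b) Filter.atTop (nhds (A a b)) := by
  have hc : Continuous (fun M : Matrix (Fin n) (Fin n) ℝ => M a b) :=
    (continuous_apply b).comp (continuous_apply a)
  exact (hc.continuousAt.tendsto).comp h

lemma icc_compact' {n : ℕ} (C : ℝ) :
    IsCompact {M : Matrix (Fin n) (Fin n) ℝ | ∀ a b, M a b ∈ Set.Icc (-C) C} := by
  have he : {M : Matrix (Fin n) (Fin n) ℝ | ∀ a b, M a b ∈ Set.Icc (-C) C} =
      Set.pi Set.univ (fun _ => Set.pi Set.univ fun _ => Set.Icc (-C) C) := by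
    ext M
    constructor
    · intro h a _; intro b _; exact h a b
    · intro h a b; exact h a (Set.mem_univ a) b (Set.mem_univ b)
  rw [he]
  exact isCompact_univ_pi fun _ => isCompact_univ_pi fun _ => isCompact_Icc

lemma orth_entry_bound {n : ℕ} {Q : Matrix (Fin n) (Fin n) ℝ} (hQ : Qᵀ * Q = 1) :
    ∀ a b, Q a b ∈ Set.Icc (-(1:ℝ)) 1 := by
  intro a b
  have hd : ∑ i, Q i b ^ 2 = 1 := by
    have := congrFun (congrFun hQ b) b
    simp only [Matrix.mul_apply, Matrix.transpose_apply, Matrix.one_apply_eq] at this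
    rw [← this]
    exact Finset.sum_congr rfl fun i _ => (sq (Q i b)) ▸ by ring
  have hle : Q a b ^ 2 ≤ 1 := by
    rw [← hd]
    exact Finset.single_le_sum (fun i _ => sq_nonneg (Q i b)) (Finset.mem_univ a)
  constructor
  · nlinarith
  · nlinarith

set_option maxHeartbeats 2000000 in
/-- Whitney's condition (a) for adjacent faces: if `S_k ∈ F(𝔪̃)` converge
to `S₀ ∈ F(𝔪)` with `𝔪 < 𝔪̃`, and the orthogonal projections `P_k` of `Sym₀(n)` onto
`τ(S_k)` converge pointwise to a linear map `P`, then `τ(S₀) ⊆ range(P)`. -/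
theorem whitney_condition_a (n L Lt : ℕ)
    (π : Fin n → Fin L) (hπmono : Monotone π) (hπsurj : Function.Surjective π)
    (πt : Fin n → Fin Lt) (hπtmono : Monotone πt) (hπtsurj : Function.Surjective πt)
    (hle : MultLE π πt) (hne : List.ofFn (multCard π) ≠ List.ofFn (multCard πt))
    (S₀ : Matrix (Fin n) (Fin n) ℝ) (hS₀ : S₀ ∈ Face π)
    (S : ℕ → Matrix (Fin n) (Fin n) ℝ) (hS : ∀ k, S k ∈ Face πt)
    (hconv : Filter.Tendsto S Filter.atTop (nhds S₀))
    (P : ℕ → Matrix (Fin n) (Fin n) ℝ →ₗ[ℝ] Matrix (Fin n) (Fin n) ℝ)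
    (hproj : ∀ k, ∀ X ∈ Sym0 n,
      P k X ∈ tauSpace (S k) ∧ ∀ Y ∈ tauSpace (S k), ((X - P k X) * Y).trace = 0)
    (Plim : Matrix (Fin n) (Fin n) ℝ →ₗ[ℝ] Matrix (Fin n) (Fin n) ℝ)
    (hPlim : ∀ X, Filter.Tendsto (fun k => P k X) Filter.atTop (nhds (Plim X))) :
    tauSpace S₀ ⊆ Set.range Plim := by
  classical
  intro X hX
  obtain ⟨⟨hXsym, hXtr0⟩, hXorth⟩ := hX
  have hdiag : ∀ k, ∃ l : Fin n → ℝ, (∀ a b, l a = l b ↔ πt a = πt b) ∧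
      ∃ Q : Matrix (Fin n) (Fin n) ℝ, Qᵀ * Q = 1 ∧ S k = Q * Matrix.diagonal l * Qᵀ := by
    intro k
    obtain ⟨-, l, -, hiff, Q, hQ, hSk⟩ := hS k
    exact ⟨l, hiff, Q, hQ, hSk⟩
  choose lam hiff Qm hQm hSQ using hdiag
  set A : ℕ → Matrix (Fin n) (Fin n) ℝ := fun k => X - P k X with hAdef
  have hPk : ∀ k, P k X ∈ tauSpace (S k) := fun k => (hproj k X ⟨hXsym, hXtr0⟩).1
  have hAorth : ∀ k, ∀ Yt ∈ tauSpace (S k), ((A k) * Yt).trace = 0 :=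
    fun k => (hproj k X ⟨hXsym, hXtr0⟩).2
  have hAsym : ∀ k, (A k)ᵀ = A k := by
    intro k
    show (X - P k X)ᵀ = X - P k X
    rw [Matrix.transpose_sub, hXsym, (hPk k).1.1]
  have hAtr : ∀ k, (A k).trace = 0 := by
    intro k
    show (X - P k X).trace = 0
    rw [Matrix.trace_sub, hXtr0, (hPk k).1.2, sub_zero]
  -- the conjugated matrices W k have block pattern
  have hWpat : ∀ k, (∀ a b, πt a ≠ πt b → ((Qm k)ᵀ * A k * Qm k) a b = 0) ∧
      (∀ j, ∑ a ∈ Finset.univ.filter (fun a => πt a = j), ((Qm k)ᵀ * A k * Qm k) a a = 0) := by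
    intro k
    refine Wpattern πt hπtsurj (hQm k) (lam k) (hiff k) (A k) (hAsym k) (hAtr k) ?_
    rw [← hSQ k]
    exact hAorth k
  -- quantitative bounds
  set q : ℕ → ℝ := fun k => ((A k) * (A k)).trace with hqdef
  have hqsq : ∀ k, q k = ∑ p : Fin n × Fin n, (A k p.1 p.2)^2 := by
    intro k
    rw [hqdef]
    show ((A k) * (A k)).trace = _
    rw [trace_mul_entries, Fintype.sum_prod_type]
    refine Finset.sum_congr rfl fun a _ => Finset.sum_congr rfl fun b _ => ?_
    have heq : A k b a = A k a b := by
      conv_lhs => rw [← hAsym k, Matrix.transpose_apply]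
    rw [heq]; ring
  have hqnn : ∀ k, 0 ≤ q k := by
    intro k
    rw [hqsq k]
    exact Finset.sum_nonneg fun p _ => sq_nonneg _
  have hqX : ∀ k, q k = ((A k) * X).trace := by
    intro k
    have h1 : ((A k) * (P k X)).trace = 0 := hAorth k _ (hPk k)
    have h2 : (A k) * X = (A k) * (A k) + (A k) * (P k X) := by
      rw [← Matrix.mul_add]
      congr 1
      show X = (X - P k X) + P k X
      rw [sub_add_cancel]
    rw [hqdef]
    show ((A k) * (A k)).trace = ((A k) * X).trace
    rw [h2, Matrix.trace_add, h1, add_zero]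
  set CX : ℝ := ∑ p : Fin n × Fin n, (X p.2 p.1)^2 with hCX
  have hCXnn : 0 ≤ CX := Finset.sum_nonneg fun p _ => sq_nonneg _
  have hqle : ∀ k, q k ≤ CX := by
    intro k
    have he : q k = ∑ p : Fin n × Fin n, A k p.1 p.2 * X p.2 p.1 := by
      rw [hqX k, trace_mul_entries, Fintype.sum_prod_type]
    have hcs := Finset.sum_mul_sq_le_sq_mul_sq Finset.univ
      (fun p : Fin n × Fin n => A k p.1 p.2) (fun p => X p.2 p.1)
    rw [← he, ← hqsq k, ← hCX] at hcs
    nlinarith [hqnn k, hCXnn]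
  have hbound : ∀ k a b, A k a b ∈ Set.Icc (-(Real.sqrt CX)) (Real.sqrt CX) := by
    intro k a b
    have h1 : (A k a b)^2 ≤ CX := by
      have : (A k a b)^2 ≤ q k := by
        rw [hqsq k]
        exact Finset.single_le_sum (fun p (_ : p ∈ Finset.univ) => sq_nonneg (A k p.1 p.2))
          (Finset.mem_univ (a, b))
      linarith [hqle k]
    have h2 : |A k a b| ≤ Real.sqrt CX := by
      rw [← Real.sqrt_sq_eq_abs]
      exact Real.sqrt_le_sqrt h1
    exact abs_le.mp h2
  -- extract a convergent subsequence of (Qm k, A k)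
  set K : Set (Matrix (Fin n) (Fin n) ℝ × Matrix (Fin n) (Fin n) ℝ) :=
    {M | ∀ a b, M a b ∈ Set.Icc (-(1:ℝ)) 1} ×ˢ
    {M | ∀ a b, M a b ∈ Set.Icc (-(Real.sqrt CX)) (Real.sqrt CX)} with hK
  have hKcomp : IsCompact K := (icc_compact' 1).prod (icc_compact' (Real.sqrt CX))
  have hmemK : ∀ k, (Qm k, A k) ∈ K := by
    intro k
    exact ⟨orth_entry_bound (hQm k), fun a b => hbound k a b⟩
  haveI hfc : FirstCountableTopology (Matrix (Fin n) (Fin n) ℝ) :=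
    inferInstanceAs (FirstCountableTopology (Fin n → Fin n → ℝ))
  obtain ⟨⟨Qi, N⟩, -, φ, hφ, hconvφ⟩ := hKcomp.tendsto_subseq hmemK
  have hQconv : Filter.Tendsto (fun j => Qm (φ j)) Filter.atTop (nhds Qi) :=
    (continuous_fst.continuousAt.tendsto).comp hconvφ
  have hAconv : Filter.Tendsto (fun j => A (φ j)) Filter.atTop (nhds N) :=
    (continuous_snd.continuousAt.tendsto).comp hconvφ
  have hSconv : Filter.Tendsto (fun j => S (φ j)) Filter.atTop (nhds S₀) :=
    hconv.comp (hφ.tendsto_atTop)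
  -- orthogonality passes to the limit
  have hQi : Qiᵀ * Qi = 1 := by
    have h1 : Filter.Tendsto (fun j => (Qm (φ j))ᵀ * Qm (φ j)) Filter.atTop (nhds (Qiᵀ * Qi)) :=
      mul_tendsto (transpose_tendsto hQconv) hQconv
    have h2 : Filter.Tendsto (fun _ : ℕ => (1 : Matrix (Fin n) (Fin n) ℝ)) Filter.atTop
        (nhds (Qiᵀ * Qi)) := by
      have : (fun j => (Qm (φ j))ᵀ * Qm (φ j)) = fun _ : ℕ => (1 : Matrix (Fin n) (Fin n) ℝ) := by
        funext j; exact hQm (φ j)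
      rw [← this]
      exact h1
    exact tendsto_nhds_unique h2 tendsto_const_nhds
  -- the limit diagonal matrix
  set D : Matrix (Fin n) (Fin n) ℝ := Qiᵀ * S₀ * Qi with hD
  have hDlim : Filter.Tendsto (fun j => (Qm (φ j))ᵀ * S (φ j) * Qm (φ j)) Filter.atTop (nhds D) :=
    conj3_tendsto _ _ _ _ hQconv hSconv
  have hdiagval : ∀ j, (Qm (φ j))ᵀ * S (φ j) * Qm (φ j) = Matrix.diagonal (lam (φ j)) := by
    intro j
    rw [hSQ (φ j)]
    exact conj_cancel (hQm (φ j)) _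
  set μ : Fin n → ℝ := fun a => D a a with hμ
  have hDdiag : D = Matrix.diagonal μ := by
    ext a b
    by_cases hab : a = b
    · subst hab; rw [Matrix.diagonal_apply_eq]
    · rw [Matrix.diagonal_apply_ne _ hab]
      have h1 : Filter.Tendsto (fun j => ((Qm (φ j))ᵀ * S (φ j) * Qm (φ j)) a b)
          Filter.atTop (nhds (D a b)) := entry_tendsto hDlim a b
      have h2 : (fun j => ((Qm (φ j))ᵀ * S (φ j) * Qm (φ j)) a b) = fun _ => (0:ℝ) := by
        funext j
        rw [hdiagval j, Matrix.diagonal_apply_ne _ hab]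
      rw [h2] at h1
      exact tendsto_nhds_unique h1 tendsto_const_nhds
  have hlamconv : ∀ a, Filter.Tendsto (fun j => lam (φ j) a) Filter.atTop (nhds (μ a)) := by
    intro a
    have h1 := entry_tendsto hDlim a a
    have h2 : (fun j => ((Qm (φ j))ᵀ * S (φ j) * Qm (φ j)) a a) = fun j => lam (φ j) a := by
      funext j
      rw [hdiagval j, Matrix.diagonal_apply_eq]
    rw [h2] at h1
    exact h1
  have hμconst : ∀ a b, πt a = πt b → μ a = μ b := by
    intro a b hab
    have h1 := hlamconv a
    have h2 : (fun j => lam (φ j) a) = fun j => lam (φ j) b := by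
      funext j
      exact (hiff (φ j) a b).mpr hab
    rw [h2] at h1
    exact tendsto_nhds_unique h1 (hlamconv b)
  have hS₀Q : S₀ = Qi * Matrix.diagonal μ * Qiᵀ := by
    rw [← hDdiag, hD]
    exact (conj_cancel' hQi S₀).symm
  -- limit of W's
  set Z : Matrix (Fin n) (Fin n) ℝ := Qiᵀ * N * Qi with hZ
  have hWconv : Filter.Tendsto (fun j => (Qm (φ j))ᵀ * A (φ j) * Qm (φ j))
      Filter.atTop (nhds Z) := conj3_tendsto _ _ _ _ hQconv hAconv
  have hZ1 : ∀ a b, πt a ≠ πt b → Z a b = 0 := by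
    intro a b hab
    have h1 := entry_tendsto hWconv a b
    have h2 : (fun j => ((Qm (φ j))ᵀ * A (φ j) * Qm (φ j)) a b) = fun _ => (0:ℝ) := by
      funext j
      exact (hWpat (φ j)).1 a b hab
    rw [h2] at h1
    exact tendsto_nhds_unique h1 tendsto_const_nhds
  have hZ2 : ∀ jj, ∑ a ∈ Finset.univ.filter (fun a => πt a = jj), Z a a = 0 := by
    intro jj
    have h1 : Filter.Tendsto (fun j => ∑ a ∈ Finset.univ.filter (fun a => πt a = jj),
        ((Qm (φ j))ᵀ * A (φ j) * Qm (φ j)) a a) Filter.atTop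
        (nhds (∑ a ∈ Finset.univ.filter (fun a => πt a = jj), Z a a)) := by
      exact tendsto_finset_sum _ fun a _ => entry_tendsto hWconv a a
    have h2 : (fun j => ∑ a ∈ Finset.univ.filter (fun a => πt a = jj),
        ((Qm (φ j))ᵀ * A (φ j) * Qm (φ j)) a a) = fun _ => (0:ℝ) := by
      funext j
      exact (hWpat (φ j)).2 jj
    rw [h2] at h1
    exact tendsto_nhds_unique h1 tendsto_const_nhds
  -- N is symmetric traceless
  have hNsym : Nᵀ = N := by
    ext a b
    have h1 := entry_tendsto hAconv b a
    have h2 : (fun j => A (φ j) b a) = fun j => A (φ j) a b := by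
      funext j
      conv_lhs => rw [← hAsym (φ j), Matrix.transpose_apply]
    rw [h2] at h1
    exact Matrix.transpose_apply N a b ▸ tendsto_nhds_unique h1 (entry_tendsto hAconv a b)
  have hNtr : N.trace = 0 := by
    have h1 : Filter.Tendsto (fun j => (A (φ j)).trace) Filter.atTop (nhds N.trace) :=
      trace_tendsto hAconv
    have h2 : (fun j => (A (φ j)).trace) = fun _ => (0:ℝ) := by
      funext j; exact hAtr (φ j)
    rw [h2] at h1
    exact tendsto_nhds_unique h1 tendsto_const_nhds
  have hNQZ : N = Qi * Z * Qiᵀ := by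
    rw [hZ]
    exact (conj_cancel' hQi N).symm
  -- N belongs to nuSpace S₀
  have hNnu : N ∈ nuSpace S₀ := by
    rw [hS₀Q, hNQZ]
    refine nu_encode hQi μ Z ?_ ?_ ?_ ?_
    · intro a b hab
      by_cases hπ : πt a = πt b
      · exact absurd (hμconst a b hπ) hab
      · exact hZ1 a b hπ
    · intro c
      exact levelsum πt μ (fun a => Z a a) hμconst hZ2 c
    · show (Qi * Z * Qiᵀ)ᵀ = Qi * Z * Qiᵀ
      rw [← hNQZ, hNsym]
    · rw [← hNQZ]
      exact hNtr
  -- hence q (φ j) → 0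
  have hq0 : Filter.Tendsto (fun j => q (φ j)) Filter.atTop (nhds 0) := by
    have h1 : Filter.Tendsto (fun j => ((A (φ j)) * X).trace) Filter.atTop (nhds ((N * X).trace)) :=
      trace_mul_tendsto X hAconv
    have h2 : (N * X).trace = 0 := by
      rw [Matrix.trace_mul_comm]
      exact hXorth N hNnu
    have h3 : (fun j => ((A (φ j)) * X).trace) = fun j => q (φ j) := by
      funext j; exact (hqX (φ j)).symm
    rw [h3, h2] at h1
    exact h1
  -- hence N = 0
  have hN0 : N = 0 := by
    ext a b
    have h1 : Filter.Tendsto (fun j => (A (φ j) a b)^2) Filter.atTop (nhds ((N a b)^2)) := by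
      have := entry_tendsto hAconv a b
      exact this.pow 2
    have h2 : (N a b)^2 ≤ 0 := by
      refine le_of_tendsto_of_tendsto' h1 hq0 fun j => ?_
      rw [hqsq (φ j)]
      exact Finset.single_le_sum (fun p (_ : p ∈ Finset.univ) => sq_nonneg (A (φ j) p.1 p.2))
        (Finset.mem_univ (a, b))
    have h3 : N a b = 0 := by nlinarith [sq_nonneg (N a b)]
    simpa using h3
  -- conclude : P (φ j) X → X, hence Plim X = X
  have hPφ : Filter.Tendsto (fun j => P (φ j) X) Filter.atTop (nhds X) := by
    have h1 : (fun j => P (φ j) X) = fun j => X - A (φ j) := by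
      funext j
      show P (φ j) X = X - (X - P (φ j) X)
      rw [sub_sub_cancel]
    rw [h1]
    have h2 : Filter.Tendsto (fun j => X - A (φ j)) Filter.atTop (nhds (X - N)) :=
      tendsto_const_nhds.sub hAconv
    rw [hN0, sub_zero] at h2
    exact h2
  have hPφ' : Filter.Tendsto (fun j => P (φ j) X) Filter.atTop (nhds (Plim X)) :=
    (hPlim X).comp (hφ.tendsto_atTop)
  exact ⟨X, tendsto_nhds_unique hPφ' hPφ⟩
end

section
/- Let 𝔪 be an eigenvalue multiplicity vector for n, let λ₁ ≤ ⋯ ≤ λ_n be real numbers with Σ λ_a = 0 such that λ_a = λ_b if and only if π(a) = π(b), and let D_λ := Diag(λ₁,…,λ_n) ∈ F(𝔪). Then there exists ε > 0 such that for every X ∈ Sym₀(n) that is block diagonal with respect to 𝔪 with each diagonal block of trace zero, with 0 < ‖X‖ < ε, and for every s ∈ (0,1], the matrices D_λ + X and D_λ + s·X have the same multiplicity type; in particular, if D_λ + X ∈ F(𝔪̃) for some multiplicity vector 𝔪̃, then D_λ + s·X ∈ F(𝔪̃) for all s ∈ (0,1]. -/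
open Matrix

lemma frobNorm_sq {n : ℕ} (X : Matrix (Fin n) (Fin n) ℝ) :
    frobNorm X ^ 2 = ∑ a, ∑ b, X a b ^ 2 := by
  have h : (X * Xᵀ).trace = ∑ a, ∑ b, X a b ^ 2 := by
    simp [Matrix.trace, Matrix.diag, Matrix.mul_apply, sq]
  rw [frobNorm, Real.sq_sqrt]
  · exact h
  · rw [h]; positivity

lemma frobNorm_nonneg {n : ℕ} (X : Matrix (Fin n) (Fin n) ℝ) : 0 ≤ frobNorm X :=
  Real.sqrt_nonneg _

lemma frobNorm_smul {n : ℕ} (t : ℝ) (X : Matrix (Fin n) (Fin n) ℝ) :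
    frobNorm (t • X) = |t| * frobNorm X := by
  rw [frobNorm, frobNorm]
  have : ((t • X) * (t • X)ᵀ).trace = t ^ 2 * (X * Xᵀ).trace := by
    simp [Matrix.transpose_smul, Matrix.smul_mul, Matrix.mul_smul, smul_smul, sq]
  rw [this, Real.sqrt_mul (sq_nonneg t), Real.sqrt_sq_eq_abs]

lemma eig_bound {n : ℕ} (X : Matrix (Fin n) (Fin n) ℝ) (w : Fin n → ℝ) (hw : w ≠ 0)
    (r : ℝ) (h : ∀ x, ∑ y, X x y * w y = r * w x) : |r| ≤ frobNorm X := by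
  have hWpos : 0 < ∑ x, w x ^ 2 := by
    obtain ⟨x, hx⟩ := Function.ne_iff.mp hw
    exact Finset.sum_pos' (fun i _ => sq_nonneg _)
      ⟨x, Finset.mem_univ x, lt_of_le_of_ne (sq_nonneg _) (Ne.symm (pow_ne_zero 2 hx))⟩
  have key : r ^ 2 * ∑ x, w x ^ 2 ≤ frobNorm X ^ 2 * ∑ x, w x ^ 2 := by
    have h1 : ∀ x, (r * w x) ^ 2 ≤ (∑ y, X x y ^ 2) * ∑ y, w y ^ 2 := by
      intro x
      rw [← h x]
      exact Finset.sum_mul_sq_le_sq_mul_sq _ _ _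
    calc r ^ 2 * ∑ x, w x ^ 2 = ∑ x, (r * w x) ^ 2 := by
          rw [Finset.mul_sum]; congr 1; ext x; ring
      _ ≤ ∑ x, (∑ y, X x y ^ 2) * ∑ y, w y ^ 2 :=
          Finset.sum_le_sum fun x _ => h1 x
      _ = frobNorm X ^ 2 * ∑ x, w x ^ 2 := by
          rw [← Finset.sum_mul, ← frobNorm_sq]
  have h2 : r ^ 2 ≤ frobNorm X ^ 2 := le_of_mul_le_mul_right key hWpos
  calc |r| = Real.sqrt (r ^ 2) := (Real.sqrt_sq_eq_abs r).symm
    _ ≤ Real.sqrt (frobNorm X ^ 2) := Real.sqrt_le_sqrt h2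
    _ = frobNorm X := by rw [Real.sqrt_sq (frobNorm_nonneg X)]


lemma core {n L' : ℕ} (lam : Fin n → ℝ) (ε : ℝ) (hε : 0 < ε)
    (hgap : ∀ a b, lam a ≠ lam b → 3 * ε ≤ |lam a - lam b|)
    (X : Matrix (Fin n) (Fin n) ℝ)
    (hX0 : ∀ a b, lam a ≠ lam b → X a b = 0)
    (hXε : frobNorm X < ε) (t : ℝ) (ht : 0 < t)
    (htXε : frobNorm (t • X) < ε)
    (π' : Fin n → Fin L')
    (h : MultType π' (Matrix.diagonal lam + X)) :
    MultType π' (Matrix.diagonal lam + t • X) := by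
  obtain ⟨μ, hμmono, hμpat, P, hP, hPA⟩ := h
  have hPPt : P * Pᵀ = 1 := mul_eq_one_comm.mp hP
  set A : Matrix (Fin n) (Fin n) ℝ := Matrix.diagonal lam + X with hA
  have hAP : ∀ x b, ∑ y, A x y * P y b = μ b * P x b := by
    intro x b
    have : A * P = P * Matrix.diagonal μ := by
      rw [hPA, Matrix.mul_assoc, Matrix.mul_assoc, hP, Matrix.mul_one]
    have := congrFun (congrFun this x) b
    rw [Matrix.mul_apply, Matrix.mul_diagonal] at this
    simpa [Matrix.mul_apply, mul_comm] using this
  -- off block entries of A vanish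
  have hAblock : ∀ x y, lam x ≠ lam y → A x y = 0 := by
    intro x y hxy
    have hne : x ≠ y := fun h => hxy (by rw [h])
    simp [hA, Matrix.add_apply, Matrix.diagonal_apply_ne _ hne, hX0 x y hxy]
  -- key column bound
  have hcol : ∀ b a0, P a0 b ≠ 0 → |μ b - lam a0| ≤ frobNorm X := by
    intro b a0 ha0
    set w : Fin n → ℝ := fun x => if lam x = lam a0 then P x b else 0 with hw
    have hwne : w ≠ 0 := by
      intro hz
      have := congrFun hz a0
      simp [hw] at this
      exact ha0 this
    have hAw : ∀ x, ∑ y, A x y * w y = μ b * w x := by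
      intro x
      by_cases hx : lam x = lam a0
      · have : ∀ y, A x y * w y = A x y * P y b := by
          intro y
          by_cases hy : lam y = lam a0
          · simp [hw, hy]
          · have : A x y = 0 := hAblock x y (by rw [hx]; exact fun h => hy h.symm)
            simp [this]
        simp only [this]
        rw [hAP x b]
        simp [hw, hx]
      · have : ∀ y, A x y * w y = 0 := by
          intro y
          by_cases hy : lam y = lam a0
          · have : A x y = 0 := hAblock x y (by rw [hy]; exact hx)
            simp [this]
          · simp [hw, hy]
        simp only [this, Finset.sum_const_zero]
        simp [hw, hx]
    have hXw : ∀ x, ∑ y, X x y * w y = (μ b - lam a0) * w x := by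
      intro x
      have hDw : ∑ y, Matrix.diagonal lam x y * w y = lam a0 * w x := by
        rw [Finset.sum_eq_single x]
        · by_cases hx : lam x = lam a0
          · simp [hw, hx, Matrix.diagonal_apply_eq]
          · simp [hw, hx, Matrix.diagonal_apply_eq]
        · intro y _ hy
          simp [Matrix.diagonal_apply_ne _ (Ne.symm hy)]
        · simp
      have := hAw x
      simp only [hA, Matrix.add_apply, add_mul, Finset.sum_add_distrib] at this
      rw [hDw] at this
      linarith [this]
    have := eig_bound X w hwne (μ b - lam a0) hXw
    exact this
  -- choose c
  have hcex : ∀ b, ∃ c : ℝ, (∃ a0, c = lam a0 ∧ P a0 b ≠ 0) ∧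
      ∀ x, lam x * P x b = c * P x b := by
    intro b
    have : ∃ a0, P a0 b ≠ 0 := by
      by_contra hall
      push_neg at hall
      have := congrFun (congrFun hP b) b
      simp [Matrix.mul_apply, Matrix.transpose_apply, hall] at this
    obtain ⟨a0, ha0⟩ := this
    refine ⟨lam a0, ⟨a0, rfl, ha0⟩, ?_⟩
    intro x
    by_cases hx : P x b = 0
    · simp [hx]
    · by_cases hl : lam x = lam a0
      · rw [hl]
      · exfalso
        have h1 := hcol b a0 ha0
        have h2 := hcol b x hx
        have h3 := hgap x a0 hl
        have := abs_sub_abs_le_abs_sub (lam x - μ b) (lam a0 - μ b)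
        have h4 : |lam x - lam a0| ≤ |μ b - lam x| + |μ b - lam a0| := by
          calc |lam x - lam a0| = |(μ b - lam a0) - (μ b - lam x)| := by ring_nf
            _ ≤ |μ b - lam a0| + |μ b - lam x| := abs_sub _ _
            _ = |μ b - lam x| + |μ b - lam a0| := by ring
        linarith
  choose c hcrange hceig using hcex
  have hcbound : ∀ b, |μ b - c b| ≤ frobNorm X := by
    intro b
    obtain ⟨a0, hca, ha0⟩ := hcrange b
    rw [hca]
    exact hcol b a0 ha0
  -- D * P = P * diagonal c
  have hDP : Matrix.diagonal lam * P = P * Matrix.diagonal c := by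
    ext x b
    rw [Matrix.diagonal_mul, Matrix.mul_diagonal]
    exact (hceig b x).trans (mul_comm _ _)
  have hD : Matrix.diagonal lam = P * Matrix.diagonal c * Pᵀ := by
    calc Matrix.diagonal lam = Matrix.diagonal lam * (P * Pᵀ) := by rw [hPPt, Matrix.mul_one]
      _ = (Matrix.diagonal lam * P) * Pᵀ := by rw [Matrix.mul_assoc]
      _ = P * Matrix.diagonal c * Pᵀ := by rw [hDP]
  -- define ν
  set ν : Fin n → ℝ := fun b => c b + t * (μ b - c b) with hν
  -- matrix identity
  have hXeq : X = A - Matrix.diagonal lam := by rw [hA]; abel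
  have hmain : Matrix.diagonal lam + t • X = P * Matrix.diagonal ν * Pᵀ := by
    have hdiag : Matrix.diagonal ν
        = Matrix.diagonal c + t • (Matrix.diagonal μ - Matrix.diagonal c) := by
      ext a b
      by_cases hab : a = b
      · subst hab
        simp [Matrix.diagonal_apply_eq, hν]
      · simp [Matrix.diagonal_apply_ne _ hab]
    rw [hXeq, hPA, hD, hdiag]
    simp only [Matrix.mul_add, Matrix.add_mul, Matrix.mul_sub, Matrix.sub_mul,
      Matrix.mul_smul, Matrix.smul_mul, smul_sub]
  -- bounds
  have hδ : ∀ b, |μ b - c b| < ε := fun b => lt_of_le_of_lt (hcbound b) hXε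
  have htδ : ∀ b, |t * (μ b - c b)| < ε := by
    intro b
    have : |t * (μ b - c b)| = |t| * |μ b - c b| := abs_mul _ _
    rw [this, abs_of_pos ht]
    calc t * |μ b - c b| ≤ t * frobNorm X := by
          apply mul_le_mul_of_nonneg_left (hcbound b) (le_of_lt ht)
      _ = |t| * frobNorm X := by rw [abs_of_pos ht]
      _ = frobNorm (t • X) := (frobNorm_smul t X).symm
      _ < ε := htXε
  have hgapc : ∀ a b, c a ≠ c b → 3 * ε ≤ |c a - c b| := by
    intro a b hab
    obtain ⟨x, hx, -⟩ := hcrange a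
    obtain ⟨y, hy, -⟩ := hcrange b
    rw [hx, hy] at hab ⊢
    exact hgap x y hab
  -- pattern for ν
  have hνμ : ∀ a b, ν a = ν b ↔ μ a = μ b := by
    intro a b
    have hda := abs_lt.mp (hδ a)
    have hdb := abs_lt.mp (hδ b)
    have htda := abs_lt.mp (htδ a)
    have htdb := abs_lt.mp (htδ b)
    constructor
    · intro hνab
      have hcab : c a = c b := by
        by_contra hc
        have := hgapc a b hc
        rcases le_abs.mp this with h | h
        · simp only [hν] at hνab; nlinarith
        · simp only [hν] at hνab; nlinarith
      simp only [hν, hcab] at hνab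
      have : t * (μ a - c b) = t * (μ b - c b) := by linarith
      have := mul_left_cancel₀ (ne_of_gt ht) this
      linarith
    · intro hμab
      have hcab : c a = c b := by
        by_contra hc
        have := hgapc a b hc
        rcases le_abs.mp this with h | h
        · nlinarith
        · nlinarith
      simp only [hν, hcab, hμab]
  have hνpat : ∀ a b, ν a = ν b ↔ π' a = π' b := by
    intro a b
    rw [hνμ a b, hμpat a b]
  -- monotone
  have hνmono : Monotone ν := by
    intro a b hab
    have hμab := hμmono hab
    have hda := abs_lt.mp (hδ a)
    have hdb := abs_lt.mp (hδ b)
    have htda := abs_lt.mp (htδ a)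
    have htdb := abs_lt.mp (htδ b)
    rcases eq_or_ne (c a) (c b) with hc | hc
    · simp only [hν, hc]
      nlinarith
    · have := hgapc a b hc
      rcases le_abs.mp this with h | h
      · nlinarith
      · simp only [hν]; nlinarith
  exact ⟨ν, hνmono, hνpat, P, hP, hmain⟩

/-- local cone structure of the faces: for small symmetric `X` that are
block diagonal with respect to `𝔪` with trace-zero blocks, `D_λ + X` and `D_λ + s·X`
have the same multiplicity type for all `s ∈ (0,1]`. -/
theorem multType_cone (n L : ℕ)
    (π : Fin n → Fin L) (hπmono : Monotone π) (hπsurj : Function.Surjective π)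
    (lam : Fin n → ℝ) (hlam : Monotone lam) (hlamsum : ∑ a, lam a = 0)
    (hpattern : ∀ a b, lam a = lam b ↔ π a = π b) :
    ∃ ε > (0 : ℝ), ∀ X : Matrix (Fin n) (Fin n) ℝ,
      X.IsSymm → (∀ a b, π a ≠ π b → X a b = 0) →
      (∀ i : Fin L, ∑ a ∈ Finset.univ.filter (fun a => π a = i), X a a = 0) →
      0 < frobNorm X → frobNorm X < ε →
      ∀ s ∈ Set.Ioc (0 : ℝ) 1, ∀ (L' : ℕ) (π' : Fin n → Fin L'),
        Monotone π' → Function.Surjective π' →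
        (MultType π' (Matrix.diagonal lam + X) ↔
          MultType π' (Matrix.diagonal lam + s • X)) := by
  classical
  set T : Finset ℝ :=
    (Finset.univ.filter fun p : Fin n × Fin n => lam p.1 ≠ lam p.2).image
      (fun p => |lam p.1 - lam p.2|) with hT
  set ε : ℝ := if h : T.Nonempty then T.min' h / 3 else 1 with hεdef
  have hε : 0 < ε := by
    rw [hεdef]
    split_ifs with h
    · have hpos : ∀ x ∈ T, 0 < x := by
        intro x hx
        rw [hT] at hx
        obtain ⟨p, hp, hval⟩ := Finset.mem_image.mp hx
        rw [Finset.mem_filter] at hp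
        have h1 : lam p.1 - lam p.2 ≠ 0 := sub_ne_zero.mpr hp.2
        have h2 : 0 < |lam p.1 - lam p.2| := abs_pos.mpr h1
        rw [hval] at h2
        exact h2
      have := hpos _ (T.min'_mem h)
      linarith
    · norm_num
  have hgap : ∀ a b, lam a ≠ lam b → 3 * ε ≤ |lam a - lam b| := by
    intro a b hab
    have hmem : |lam a - lam b| ∈ T := by
      rw [hT]
      exact Finset.mem_image.mpr ⟨(a, b), Finset.mem_filter.mpr ⟨Finset.mem_univ _, hab⟩, rfl⟩
    have hne : T.Nonempty := ⟨_, hmem⟩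
    have hle := T.min'_le _ hmem
    rw [hεdef, dif_pos hne]
    linarith
  refine ⟨ε, hε, ?_⟩
  intro X hXsymm hXblock hXtr hX1 hX2 s hs L' π' _ _
  have hX0 : ∀ a b, lam a ≠ lam b → X a b = 0 := by
    intro a b hab
    exact hXblock a b (fun h => hab ((hpattern a b).mpr h))
  have hsX0 : ∀ a b, lam a ≠ lam b → (s • X) a b = 0 := by
    intro a b hab
    simp [Matrix.smul_apply, hX0 a b hab]
  have hfsX : frobNorm (s • X) < ε := by
    rw [frobNorm_smul, abs_of_pos hs.1]
    calc s * frobNorm X ≤ 1 * frobNorm X :=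
          mul_le_mul_of_nonneg_right hs.2 (frobNorm_nonneg X)
      _ = frobNorm X := one_mul _
      _ < ε := hX2
  constructor
  · exact core lam ε hε hgap X hX0 hX2 s hs.1 hfsX π'
  · intro h
    have hinv : s⁻¹ • (s • X) = X := by
      rw [smul_smul, inv_mul_cancel₀ (ne_of_gt hs.1), one_smul]
    have := core lam ε hε hgap (s • X) hsX0 hfsX s⁻¹ (inv_pos.mpr hs.1)
      (by rw [hinv]; exact hX2) π' h
    rwa [hinv] at this
end

section
/- Let 𝔪 be an eigenvalue multiplicity vector for n, let λ₁ ≤ ⋯ ≤ λ_n be real numbers with Σ λ_a = 0 such that λ_a = λ_b if and only if π(a) = π(b), and let D_λ := Diag(λ₁,…,λ_n). Then for every ε > 0 there exists δ > 0 such that every S ∈ Sym₀(n) with ‖S − D_λ‖ < δ admits an A ∈ SO(n) with ‖A − I_n‖ < ε such that A·S·Aᵀ is block diagonal with respect to 𝔪. -/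
open Matrix
open Filter

/-- The operator norm (ℓ²-operator norm) of a square real matrix. -/
noncomputable def matrixOpNorm {k : ℕ} (A : Matrix (Fin k) (Fin k) ℝ) : ℝ :=
  ‖(Matrix.toEuclideanCLM (𝕜 := ℝ) A : EuclideanSpace ℝ (Fin k) →L[ℝ] EuclideanSpace ℝ (Fin k))‖

lemma exists_spectral {n : ℕ} (S : Matrix (Fin n) (Fin n) ℝ) (hS : S.IsSymm) :
    ∃ Q : Matrix (Fin n) (Fin n) ℝ, ∃ d : Fin n → ℝ,
      Qᵀ * Q = 1 ∧ S = Q * Matrix.diagonal d * Qᵀ := by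
  have hH : S.IsHermitian := by
    rw [Matrix.IsHermitian, Matrix.conjTranspose_eq_transpose_of_trivial]; exact hS
  refine ⟨hH.eigenvectorUnitary, RCLike.ofReal ∘ hH.eigenvalues, ?_, ?_⟩
  · have h := (Unitary.mem_iff.mp hH.eigenvectorUnitary.2).1
    rwa [Matrix.star_eq_conjTranspose, Matrix.conjTranspose_eq_transpose_of_trivial] at h
  · have h := hH.spectral_theorem
    rwa [Unitary.conjStarAlgAut_apply, Matrix.star_eq_conjTranspose, Matrix.conjTranspose_eq_transpose_of_trivial] at h

lemma isCompact_orth {n : ℕ} :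
    IsCompact {Q : Matrix (Fin n) (Fin n) ℝ | Qᵀ * Q = 1} := by
  have hbig : IsCompact ((Set.univ.pi fun _ : Fin n => Set.univ.pi fun _ : Fin n =>
      Set.Icc (-1:ℝ) 1) : Set (Matrix (Fin n) (Fin n) ℝ)) :=
    isCompact_univ_pi fun _ => isCompact_univ_pi fun _ => isCompact_Icc
  apply hbig.of_isClosed_subset
  · have hc : Continuous fun Q : Matrix (Fin n) (Fin n) ℝ => Qᵀ * Q :=
      (continuous_id.matrix_transpose).matrix_mul continuous_id
    exact isClosed_singleton.preimage hc
  · intro Q hQ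
    refine Set.mem_pi.mpr fun a _ => Set.mem_pi.mpr fun b _ => ?_
    have hdiag : ∑ c, Q c b * Q c b = 1 := by
      have := congrFun (congrFun (show (Matrix.of Q)ᵀ * Matrix.of Q = 1 from hQ) b) b
      simpa [Matrix.mul_apply, Matrix.one_apply] using this
    have h1 : Q a b * Q a b ≤ 1 := by
      rw [← hdiag]
      exact Finset.single_le_sum (f := fun c => Q c b * Q c b)
        (fun c _ => mul_self_nonneg _) (Finset.mem_univ a)
    have habs : |Q a b| ≤ 1 := by
      nlinarith [abs_nonneg (Q a b), sq_abs (Q a b)]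
    exact abs_le.mp habs

set_option maxHeartbeats 1000000 in
set_option synthInstance.maxHeartbeats 400000 in
lemma continuous_matrixOpNorm {k : ℕ} : Continuous (matrixOpNorm (k := k)) := by
  let f : Matrix (Fin k) (Fin k) ℝ →ₗ[ℝ]
      (EuclideanSpace ℝ (Fin k) →L[ℝ] EuclideanSpace ℝ (Fin k)) :=
    { toFun := fun M => Matrix.toEuclideanCLM (𝕜 := ℝ) M,
      map_add' := fun M N => map_add _ M N,
      map_smul' := fun r M => map_smul (Matrix.toEuclideanCLM (𝕜 := ℝ)) r M }
  exact continuous_norm.comp f.continuous_of_finiteDimensional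

lemma matrixOpNorm_zero {k : ℕ} : matrixOpNorm (0 : Matrix (Fin k) (Fin k) ℝ) = 0 := by
  rw [matrixOpNorm, map_zero]; exact norm_zero

lemma matrixOpNorm_nonneg {k : ℕ} (M : Matrix (Fin k) (Fin k) ℝ) : 0 ≤ matrixOpNorm M :=
  norm_nonneg _

set_option maxHeartbeats 1000000 in
set_option synthInstance.maxHeartbeats 400000 in
lemma tendsto_of_opNorm {k : ℕ} {S : ℕ → Matrix (Fin k) (Fin k) ℝ} {D : Matrix (Fin k) (Fin k) ℝ}
    (h : Filter.Tendsto (fun j => matrixOpNorm (S j - D)) Filter.atTop (nhds 0)) :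
    Filter.Tendsto S Filter.atTop (nhds D) := by
  have hg : Continuous fun T : EuclideanSpace ℝ (Fin k) →L[ℝ] EuclideanSpace ℝ (Fin k) =>
      (Matrix.toEuclideanCLM (𝕜 := ℝ)).symm T := by
    let g : (EuclideanSpace ℝ (Fin k) →L[ℝ] EuclideanSpace ℝ (Fin k)) →ₗ[ℝ]
        Matrix (Fin k) (Fin k) ℝ :=
      { toFun := fun T => (Matrix.toEuclideanCLM (𝕜 := ℝ)).symm T,
        map_add' := fun M N => map_add _ M N,
        map_smul' := fun r M => map_smul (Matrix.toEuclideanCLM (𝕜 := ℝ)).symm r M }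
    exact g.continuous_of_finiteDimensional
  have h1 : Filter.Tendsto (fun j => Matrix.toEuclideanCLM (𝕜 := ℝ) (S j - D))
      Filter.atTop (nhds 0) := tendsto_zero_iff_norm_tendsto_zero.mpr h
  have h2 : Filter.Tendsto (fun j => S j - D) Filter.atTop (nhds 0) := by
    have h3 := (hg.tendsto 0).comp h1
    have he : (fun j => S j - D) = (fun T : EuclideanSpace ℝ (Fin k) →L[ℝ] EuclideanSpace ℝ (Fin k)
        => (Matrix.toEuclideanCLM (𝕜 := ℝ)).symm T) ∘
        (fun j => Matrix.toEuclideanCLM (𝕜 := ℝ) (S j - D)) := by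
      funext j
      simp only [Function.comp_apply, StarAlgEquiv.symm_apply_apply]
    rw [he]
    have hz : (Matrix.toEuclideanCLM (𝕜 := ℝ)).symm 0 = (0 : Matrix (Fin k) (Fin k) ℝ) := map_zero _
    rwa [hz] at h3
  simpa using tendsto_sub_nhds_zero_iff.mp h2

/-- every symmetric traceless matrix close to `D_λ` can be put into block
diagonal form (with respect to the block structure of `λ`) by conjugation with a special
orthogonal matrix close to the identity. -/
theorem block_diagonalize_near_diagonal (n L : ℕ)
    (π : Fin n → Fin L) (hπmono : Monotone π) (hπsurj : Function.Surjective π)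
    (lam : Fin n → ℝ) (hlam : Monotone lam) (hlamsum : ∑ a, lam a = 0)
    (hpattern : ∀ a b, lam a = lam b ↔ π a = π b) :
    ∀ ε > (0 : ℝ), ∃ δ > (0 : ℝ), ∀ S : Matrix (Fin n) (Fin n) ℝ,
      S.IsSymm → S.trace = 0 → matrixOpNorm (S - Matrix.diagonal lam) < δ →
      ∃ A : Matrix (Fin n) (Fin n) ℝ, Aᵀ * A = 1 ∧ A.det = 1 ∧
        matrixOpNorm (A - 1) < ε ∧
        ∀ a b, π a ≠ π b → (A * S * Aᵀ) a b = 0 := by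
  intro ε hε
  by_contra hcon
  push_neg at hcon
  have hconk : ∀ k : ℕ, ∃ S : Matrix (Fin n) (Fin n) ℝ, S.IsSymm ∧ S.trace = 0 ∧
      matrixOpNorm (S - Matrix.diagonal lam) < 1/((k:ℝ)+1) ∧
      ∀ A : Matrix (Fin n) (Fin n) ℝ, Aᵀ * A = 1 → A.det = 1 → matrixOpNorm (A - 1) < ε →
        ∃ a b, π a ≠ π b ∧ (A * S * Aᵀ) a b ≠ 0 := by
    intro k
    exact hcon (1/((k:ℝ)+1)) (by positivity)
  choose S hsymm htr hnrm hbad using hconk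
  choose Q d hQ hdec using fun k => exists_spectral (S k) (hsymm k)
  haveI : FirstCountableTopology (Matrix (Fin n) (Fin n) ℝ) :=
    inferInstanceAs (FirstCountableTopology (Fin n → Fin n → ℝ))
  obtain ⟨Qlim, hQlimmem, φ, hφ, hQc⟩ :=
    isCompact_orth.tendsto_subseq (x := Q) (fun k => hQ k)
  have hQlimorth : Qlimᵀ * Qlim = 1 := hQlimmem
  have hQlimorth2 : Qlim * Qlimᵀ = 1 := mul_eq_one_comm.mp hQlimorth
  -- convergence of S ∘ φ to diagonal lam
  have hSc : Tendsto (fun j => S (φ j)) atTop (nhds (Matrix.diagonal lam)) := by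
    apply tendsto_of_opNorm
    refine squeeze_zero (f := fun j : ℕ => matrixOpNorm (S (φ j) - Matrix.diagonal lam))
      (g := fun j : ℕ => 1/((j:ℝ)+1)) (fun j => matrixOpNorm_nonneg _) ?_
      tendsto_one_div_add_atTop_nhds_zero_nat
    intro j
    refine le_trans (le_of_lt (hnrm (φ j))) ?_
    apply one_div_le_one_div_of_le (by positivity)
    have : j ≤ φ j := hφ.le_apply
    have : (j:ℝ) ≤ (φ j : ℝ) := by exact_mod_cast this
    linarith
  -- each Qᵀ S Q is diagonal
  have hkeydiag : ∀ k, (Q k)ᵀ * S k * Q k = Matrix.diagonal (d k) := by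
    intro k
    rw [hdec k]
    simp only [Matrix.mul_assoc]
    rw [hQ k, Matrix.mul_one, ← Matrix.mul_assoc, hQ k, Matrix.one_mul]
  -- limit of the diagonals
  set Λ : Matrix (Fin n) (Fin n) ℝ := Qlimᵀ * Matrix.diagonal lam * Qlim with hΛdef
  have hΛc : Tendsto (fun j => Matrix.diagonal (d (φ j))) atTop (nhds Λ) := by
    have hfc : Continuous fun p : Matrix (Fin n) (Fin n) ℝ × Matrix (Fin n) (Fin n) ℝ =>
        p.1ᵀ * p.2 * p.1 :=
      ((continuous_fst.matrix_transpose).matrix_mul continuous_snd).matrix_mul continuous_fst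
    have hpt : Tendsto (fun j => (Q (φ j), S (φ j))) atTop
        (nhds (Qlim, Matrix.diagonal lam)) := hQc.prodMk_nhds hSc
    have := (hfc.tendsto (Qlim, Matrix.diagonal lam)).comp hpt
    simp only [Function.comp_def] at this
    convert this using 1
    funext j
    exact (hkeydiag (φ j)).symm
  -- Λ is diagonal
  have hoff : ∀ a b, a ≠ b → Λ a b = 0 := by
    intro a b hab
    have hev : Continuous fun M : Matrix (Fin n) (Fin n) ℝ => M a b :=
      (continuous_apply b).comp (continuous_apply a)
    have h1 : Tendsto (fun j => Matrix.diagonal (d (φ j)) a b) atTop (nhds (Λ a b)) :=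
      (hev.tendsto Λ).comp hΛc
    have h2 : (fun j => Matrix.diagonal (d (φ j)) a b) = fun _ => (0:ℝ) := by
      funext j; exact Matrix.diagonal_apply_ne _ hab
    rw [h2] at h1
    exact (tendsto_nhds_unique tendsto_const_nhds h1).symm
  set dd : Fin n → ℝ := fun a => Λ a a with hdddef
  have hΛdiag : Λ = Matrix.diagonal dd := by
    ext a b
    by_cases h : a = b
    · subst h; rw [Matrix.diagonal_apply_eq]
    · rw [Matrix.diagonal_apply_ne _ h]; exact hoff a b h
  -- eigen relation
  have hM : Matrix.diagonal lam * Qlim = Qlim * Matrix.diagonal dd := by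
    rw [← hΛdiag, hΛdef, ← Matrix.mul_assoc, ← Matrix.mul_assoc, hQlimorth2, Matrix.one_mul]
  have hkey : ∀ a c, Qlim a c ≠ 0 → lam a = dd c := by
    intro a c h
    have := congrFun (congrFun hM a) c
    rw [Matrix.diagonal_mul, Matrix.mul_diagonal] at this
    exact mul_left_cancel₀ h (by rw [mul_comm (Qlim a c)]; exact this)
  -- the conjugating matrices
  set A : ℕ → Matrix (Fin n) (Fin n) ℝ := fun j => Qlim * (Q (φ j))ᵀ with hAdef
  have hAc : Tendsto A atTop (nhds 1) := by
    have hg : Continuous fun M : Matrix (Fin n) (Fin n) ℝ => Qlim * Mᵀ :=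
      continuous_const.matrix_mul (continuous_id.matrix_transpose)
    have := (hg.tendsto Qlim).comp hQc
    simp only [Function.comp_def] at this
    rwa [hQlimorth2] at this
  have hAorth : ∀ j, (A j)ᵀ * A j = 1 := by
    intro j
    have hQQ : Q (φ j) * (Q (φ j))ᵀ = 1 := mul_eq_one_comm.mp (hQ (φ j))
    rw [hAdef]
    simp only [Matrix.transpose_mul, Matrix.transpose_transpose]
    rw [Matrix.mul_assoc, ← Matrix.mul_assoc Qlimᵀ, hQlimorth, Matrix.one_mul, hQQ]
  have hblock : ∀ j a b, π a ≠ π b → (A j * S (φ j) * (A j)ᵀ) a b = 0 := by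
    intro j a b hab
    have hconj : A j * S (φ j) * (A j)ᵀ = Qlim * Matrix.diagonal (d (φ j)) * Qlimᵀ := by
      rw [← hkeydiag (φ j), hAdef]
      simp only [Matrix.transpose_mul, Matrix.transpose_transpose, Matrix.mul_assoc]
    rw [hconj, Matrix.mul_apply]
    apply Finset.sum_eq_zero
    intro c _
    rw [Matrix.mul_diagonal, Matrix.transpose_apply]
    by_cases ha0 : Qlim a c = 0
    · rw [ha0]; ring
    by_cases hb0 : Qlim b c = 0
    · rw [hb0]; ring
    exact absurd ((hpattern a b).mp ((hkey a c ha0).trans (hkey b c hb0).symm)) hab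
  -- pick a good index
  have hnormc : Tendsto (fun j => matrixOpNorm (A j - 1)) atTop (nhds 0) := by
    have h0 : Tendsto (fun j => A j - 1) atTop (nhds 0) :=
      tendsto_sub_nhds_zero_iff.mpr hAc
    have := (continuous_matrixOpNorm.tendsto 0).comp h0
    simpa [Function.comp_def, matrixOpNorm_zero] using this
  have hdetc : Tendsto (fun j => (A j).det) atTop (nhds 1) := by
    have := ((continuous_id.matrix_det).tendsto (1 : Matrix (Fin n) (Fin n) ℝ)).comp hAc
    simpa [Function.comp_def] using this
  have hev1 : ∀ᶠ j in atTop, matrixOpNorm (A j - 1) < ε := hnormc.eventually_lt_const hε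
  have hev2 : ∀ᶠ j in atTop, (0:ℝ) < (A j).det := hdetc.eventually_const_lt (by norm_num)
  obtain ⟨j, hj1, hj2⟩ := (hev1.and hev2).exists
  have hdet2 : (A j).det * (A j).det = 1 := by
    have := congrArg Matrix.det (hAorth j)
    rwa [Matrix.det_mul, Matrix.det_transpose, Matrix.det_one] at this
  have hdet : (A j).det = 1 := by nlinarith
  obtain ⟨a, b, hab, hne⟩ := hbad (φ j) (A j) (hAorth j) hdet hj1
  exact hne (hblock j a b hab)
end

section
/- Let n ≥ 6 and let 𝔪 = (m₁,…,m_L) be a tuple of positive integers with m₁+⋯+m_L = n and Σ_{i=1}^{L} (m_i(m_i+1)/2 − 1) ≤ n. Set M₀ = 0, M_i = m₁+⋯+m_i, and let π : {1,…,n} → {1,…,L} send a to the unique i with M_{π(a)−1} < a ≤ M_{π(a)}. Then the number of pairs (b,c) ∈ {1,…,n}² with b ≥ 2 and π(b) < π(c) is at least n + 1. -/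
/-- `d(m) = m(m+1)/2 − 1`. -/
def dcodim (m : ℕ) : ℕ := m * (m + 1) / 2 - 1

private lemma fiber_facts (k : ℕ) (hk : 1 ≤ k) :
    k * k + k = 2 * dcodim k + 2 ∧ k ≤ dcodim k + 1 := by
  obtain ⟨q, hq⟩ := (Nat.even_mul_succ_self k).two_dvd
  have hd : dcodim k = q - 1 := by
    unfold dcodim
    rw [hq, Nat.mul_div_cancel_left _ two_pos]
  have hq' : k * k + k = 2 * q := by rw [← hq]; ring
  have h2 : 1 + 1 ≤ k * k + k := Nat.add_le_add (Nat.mul_pos hk hk) hk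
  have h3 : k + k ≤ k * k + k := Nat.add_le_add (Nat.le_mul_of_pos_left k hk) le_rfl
  rw [hq'] at h2 h3
  rw [hd, hq']
  omega

private lemma fiber_six (k : ℕ) (hk : 1 ≤ k) (hd6 : dcodim k ≤ 6) :
    5 * (dcodim k + 1 - k) ≤ 3 * dcodim k := by
  match k with
  | 0 => omega
  | 1 => decide
  | 2 => decide
  | 3 => decide
  | (j+4) =>
    exfalso
    have h20 : 20 ≤ (j + 4) * (j + 4 + 1) :=
      le_trans (by norm_num) (Nat.mul_le_mul (show 4 ≤ j + 4 by omega) (show 5 ≤ j + 4 + 1 by omega))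
    have hd' : (j + 4) * (j + 4 + 1) / 2 - 1 ≤ 6 := hd6
    generalize hX : (j + 4) * (j + 4 + 1) = X at h20 hd'
    omega

private lemma filter_prod_card {α β : Type*} [Fintype α] [Fintype β]
    (p : α → Prop) (q : β → Prop) [DecidablePred p] [DecidablePred q] :
    (Finset.univ.filter fun x : α × β => p x.1 ∧ q x.2).card
      = (Finset.univ.filter p).card * (Finset.univ.filter q).card := by
  rw [← Finset.card_product]
  congr 1
  ext x
  simp [Finset.mem_product]

/-- if `n ≥ 6` and the multiplicity vector `𝔪 = (m₁,…,m_L)` satisfies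
`Σ d(mᵢ) ≤ n`, then there are at least `n + 1` pairs `(b,c)` with `b ≥ 2` and
`π(b) < π(c)` (indices taken in `{1,…,n}`, i.e. `b ≠ first index` in `Fin n`). -/
theorem many_good_triplets_of_dim_ge_six (n L : ℕ) (hn : 6 ≤ n)
    (π : Fin n → Fin L) (hπmono : Monotone π) (hπsurj : Function.Surjective π)
    (hcodim : ∑ i : Fin L, dcodim (multCard π i) ≤ n) :
    n + 1 ≤ (Finset.univ.filter
      (fun p : Fin n × Fin n => 1 ≤ (p.1 : ℕ) ∧ π p.1 < π p.2)).card := by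
  haveI hn0 : NeZero n := ⟨by omega⟩
  have hL0 : 0 < L := (π ⟨0, by omega⟩).pos
  haveI hL0' : NeZero L := ⟨by omega⟩
  have hm1 : ∀ i, 1 ≤ multCard π i := by
    intro i
    obtain ⟨a, ha⟩ := hπsurj i
    refine Finset.card_pos.mpr ⟨a, ?_⟩
    simp [ha]
  have hsum : ∑ i, multCard π i = n := by
    have h := Finset.card_eq_sum_card_fiberwise
      (f := π) (s := Finset.univ) (t := Finset.univ) (fun x _ => Finset.mem_univ _)
    simpa [multCard] using h.symm
  have hπ0 : π 0 = 0 := by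
    obtain ⟨a, ha⟩ := hπsurj 0
    exact le_antisymm (ha ▸ hπmono (Fin.zero_le a)) (Fin.zero_le _)
  -- cardinality of the c's with positive π-value
  have hApos : multCard π 0 + (Finset.univ.filter fun c : Fin n => 0 < π c).card = n := by
    have h := Finset.card_filter_add_card_filter_not
      (s := (Finset.univ : Finset (Fin n))) (p := fun c => π c = 0)
    have he : (Finset.univ.filter fun c : Fin n => ¬ π c = 0)
        = Finset.univ.filter fun c : Fin n => 0 < π c := by
      apply Finset.filter_congr
      intro c _
      simp [Fin.pos_iff_ne_zero']
    rw [he] at h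
    simpa [multCard, Finset.card_univ] using h
  -- splitting the `<` pairs according to whether the first coordinate is 0
  have hTB : (Finset.univ.filter fun p : Fin n × Fin n => 1 ≤ (p.1 : ℕ) ∧ π p.1 < π p.2).card
      + (Finset.univ.filter fun c : Fin n => 0 < π c).card
      = (Finset.univ.filter fun p : Fin n × Fin n => π p.1 < π p.2).card := by
    have h1 := Finset.card_filter_add_card_filter_not
      (s := Finset.univ.filter fun p : Fin n × Fin n => π p.1 < π p.2)
      (p := fun p => 1 ≤ (p.1 : ℕ))
    have h2 : (Finset.univ.filter fun p : Fin n × Fin n => π p.1 < π p.2).filter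
        (fun p => 1 ≤ (p.1 : ℕ))
        = Finset.univ.filter fun p : Fin n × Fin n => 1 ≤ (p.1 : ℕ) ∧ π p.1 < π p.2 := by
      rw [Finset.filter_filter]
      exact Finset.filter_congr fun p _ => and_comm
    have h3 : (Finset.univ.filter fun p : Fin n × Fin n => π p.1 < π p.2).filter
        (fun p => ¬ 1 ≤ (p.1 : ℕ))
        = Finset.univ.filter fun p : Fin n × Fin n => p.1 = 0 ∧ 0 < π p.2 := by
      rw [Finset.filter_filter]
      apply Finset.filter_congr
      intro p _
      constructor
      · rintro ⟨hlt, hp⟩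
        have hp0 : p.1 = 0 := by
          rw [Fin.ext_iff, Fin.val_zero]
          omega
        refine ⟨hp0, ?_⟩
        rw [hp0, hπ0] at hlt
        exact hlt
      · rintro ⟨hp0, hpos⟩
        refine ⟨?_, ?_⟩
        · rw [hp0, hπ0]
          exact hpos
        · rw [hp0]
          simp
    have h4 : (Finset.univ.filter fun p : Fin n × Fin n => p.1 = 0 ∧ 0 < π p.2).card
        = (Finset.univ.filter fun c : Fin n => 0 < π c).card := by
      rw [filter_prod_card (fun a : Fin n => a = 0) (fun c : Fin n => 0 < π c)]
      rw [Finset.filter_eq']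
      simp
    rw [h2, h3, h4] at h1
    exact h1
  -- the diagonal pairs
  have hdiag : (Finset.univ.filter fun p : Fin n × Fin n => π p.1 = π p.2).card
      = ∑ i, multCard π i * multCard π i := by
    rw [Finset.card_eq_sum_card_fiberwise
      (f := fun p : Fin n × Fin n => π p.1) (t := Finset.univ) (fun x _ => Finset.mem_univ _)]
    refine Finset.sum_congr rfl fun i _ => ?_
    rw [Finset.filter_filter]
    have he : (Finset.univ.filter fun p : Fin n × Fin n => π p.1 = π p.2 ∧ π p.1 = i)
        = Finset.univ.filter fun p : Fin n × Fin n => π p.1 = i ∧ π p.2 = i := by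
      apply Finset.filter_congr
      intro p _
      constructor
      · rintro ⟨h1, h2⟩
        exact ⟨h2, h1 ▸ h2⟩
      · rintro ⟨h1, h2⟩
        exact ⟨h1.trans h2.symm, h1⟩
    rw [he, filter_prod_card (fun a : Fin n => π a = i) (fun a : Fin n => π a = i)]
    rfl
  -- swap symmetry
  have hswap : (Finset.univ.filter fun p : Fin n × Fin n => π p.2 < π p.1).card
      = (Finset.univ.filter fun p : Fin n × Fin n => π p.1 < π p.2).card := by
    refine Finset.card_bij (fun p _ => Prod.swap p) ?_ ?_ ?_
    · intro a ha
      simp only [Finset.mem_filter, Finset.mem_univ, true_and] at ha ⊢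
      exact ha
    · intro a _ b _ h
      exact Prod.swap_injective h
    · intro b hb
      simp only [Finset.mem_filter, Finset.mem_univ, true_and] at hb
      exact ⟨Prod.swap b, by simp [hb], Prod.swap_swap b⟩
  -- total count
  have htot : (Finset.univ.filter fun p : Fin n × Fin n => π p.1 < π p.2).card
      + (Finset.univ.filter fun p : Fin n × Fin n => π p.2 < π p.1).card
      + (Finset.univ.filter fun p : Fin n × Fin n => π p.1 = π p.2).card = n * n := by
    have h1 := Finset.card_filter_add_card_filter_not
      (s := (Finset.univ : Finset (Fin n × Fin n)))
      (p := fun p => π p.1 < π p.2 ∨ π p.2 < π p.1)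
    have h2 : (Finset.univ.filter fun p : Fin n × Fin n => ¬(π p.1 < π p.2 ∨ π p.2 < π p.1))
        = Finset.univ.filter fun p : Fin n × Fin n => π p.1 = π p.2 := by
      apply Finset.filter_congr
      intro p _
      simp only [not_or, not_lt]
      constructor
      · rintro ⟨h1', h2'⟩
        exact le_antisymm h2' h1'
      · intro h
        exact ⟨h.ge, h.le⟩
    have h3 : (Finset.univ.filter fun p : Fin n × Fin n => π p.1 < π p.2 ∨ π p.2 < π p.1)
        = (Finset.univ.filter fun p : Fin n × Fin n => π p.1 < π p.2)
          ∪ (Finset.univ.filter fun p : Fin n × Fin n => π p.2 < π p.1) :=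
      Finset.filter_or _ _ _
    have h4 : Disjoint (Finset.univ.filter fun p : Fin n × Fin n => π p.1 < π p.2)
        (Finset.univ.filter fun p : Fin n × Fin n => π p.2 < π p.1) := by
      rw [Finset.disjoint_left]
      intro p hp hp'
      simp only [Finset.mem_filter, Finset.mem_univ, true_and] at hp hp'
      exact absurd (hp.trans hp') (lt_irrefl _)
    rw [h3, Finset.card_union_of_disjoint h4, h2] at h1
    simpa [Finset.card_univ] using h1
  -- sum identities
  have hS2 : (∑ i, multCard π i * multCard π i) + n
      = 2 * (∑ i, dcodim (multCard π i)) + 2 * L := by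
    calc (∑ i, multCard π i * multCard π i) + n
        = ∑ i, (multCard π i * multCard π i + multCard π i) := by
          rw [Finset.sum_add_distrib, hsum]
      _ = ∑ i, (2 * dcodim (multCard π i) + 2) :=
          Finset.sum_congr rfl fun i _ => (fiber_facts (multCard π i) (hm1 i)).1
      _ = 2 * (∑ i, dcodim (multCard π i)) + 2 * L := by
          rw [Finset.sum_add_distrib, ← Finset.mul_sum, Finset.sum_const, Finset.card_univ,
            Fintype.card_fin, smul_eq_mul, mul_comm L 2]
  have hsL : (∑ i, dcodim (multCard π i)) + L
      = (∑ i, (dcodim (multCard π i) + 1 - multCard π i)) + n := by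
    calc (∑ i, dcodim (multCard π i)) + L
        = ∑ i, (dcodim (multCard π i) + 1) := by
          rw [Finset.sum_add_distrib, Finset.sum_const, Finset.card_univ,
            Fintype.card_fin, smul_eq_mul, mul_one]
      _ = ∑ i, ((dcodim (multCard π i) + 1 - multCard π i) + multCard π i) :=
          Finset.sum_congr rfl fun i _ => by
            have := (fiber_facts (multCard π i) (hm1 i)).2
            omega
      _ = _ := by rw [Finset.sum_add_distrib, hsum]
  have hEs : (∑ i, (dcodim (multCard π i) + 1 - multCard π i)) ≤ ∑ i, dcodim (multCard π i) :=
    Finset.sum_le_sum fun i _ => by have := hm1 i; omega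
  have hm0 : 1 ≤ multCard π 0 := hm1 0
  by_cases h6 : n = 6
  · have hsix : 5 * (∑ i, (dcodim (multCard π i) + 1 - multCard π i))
        ≤ 3 * ∑ i, dcodim (multCard π i) := by
      rw [Finset.mul_sum, Finset.mul_sum]
      refine Finset.sum_le_sum fun i _ => fiber_six (multCard π i) (hm1 i) ?_
      calc dcodim (multCard π i)
          ≤ ∑ j, dcodim (multCard π j) :=
            Finset.single_le_sum (f := fun j => dcodim (multCard π j))
              (fun j _ => Nat.zero_le _) (Finset.mem_univ i)
        _ ≤ n := hcodim
        _ = 6 := h6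
    subst h6
    linarith [hTB, hApos, htot, hswap, hdiag, hS2, hsL, hEs, hcodim, hsix, hm0]
  · have h7 : 7 ≤ n := by omega
    have hnn : 7 * n ≤ n * n := Nat.mul_le_mul_right n h7
    linarith [hTB, hApos, htot, hswap, hdiag, hS2, hsL, hEs, hcodim, hm0, hnn]
end

section
/- There is no continuous map v : ℝ² ∖ {(0,0)} → ℝ² ∖ {(0,0)} such that for every (a,b) ≠ (0,0), the vector v(a,b) is an eigenvector of the matrix H(a,b) := [[a, b],[b, −a]] for its larger eigenvalue √(a²+b²); i.e., there is no continuous nonvanishing v with H(a,b)·v(a,b) = √(a²+b²)·v(a,b) for all (a,b) ∈ ℝ² ∖ {(0,0)}. -/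
/-- there is no continuous choice, on `ℝ² ∖ {0}`, of a nonvanishing
eigenvector of `H(a,b) = [[a,b],[b,−a]]` for its larger eigenvalue `√(a²+b²)`. -/
theorem no_continuous_eigenvector_selection :
    ¬ ∃ v : ℝ × ℝ → ℝ × ℝ,
      ContinuousOn v {p : ℝ × ℝ | p ≠ 0} ∧
      ∀ p : ℝ × ℝ, p ≠ 0 →
        v p ≠ 0 ∧
        (p.1 * (v p).1 + p.2 * (v p).2, p.2 * (v p).1 - p.1 * (v p).2) =
          Real.sqrt (p.1 ^ 2 + p.2 ^ 2) • v p := by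
  rintro ⟨v, hv, hev⟩
  have hne : ∀ θ : ℝ, ((Real.cos θ, Real.sin θ) : ℝ × ℝ) ≠ 0 := by
    intro θ h
    have h1 : Real.cos θ = 0 ∧ Real.sin θ = 0 := by
      simpa [Prod.ext_iff] using h
    have h2 := Real.sin_sq_add_cos_sq θ
    rw [h1.1, h1.2] at h2
    norm_num at h2
  set f : ℝ → ℝ := fun θ =>
    Real.cos (θ/2) * (v (Real.cos θ, Real.sin θ)).1 +
    Real.sin (θ/2) * (v (Real.cos θ, Real.sin θ)).2 with hfdef
  have hw : Continuous fun θ : ℝ => v (Real.cos θ, Real.sin θ) :=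
    hv.comp_continuous (Real.continuous_cos.prodMk Real.continuous_sin)
      (fun θ => hne θ)
  have hcont : Continuous f := by
    apply Continuous.add
    · exact (Real.continuous_cos.comp (continuous_id.div_const 2)).mul
        (continuous_fst.comp hw)
    · exact (Real.continuous_sin.comp (continuous_id.div_const 2)).mul
        (continuous_snd.comp hw)
  have key : ∀ θ : ℝ,
      (v (Real.cos θ, Real.sin θ)).1 = Real.cos (θ/2) * f θ ∧
      (v (Real.cos θ, Real.sin θ)).2 = Real.sin (θ/2) * f θ := by
    intro θ
    obtain ⟨_, heq⟩ := hev (Real.cos θ, Real.sin θ) (hne θ)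
    have hsqrt : Real.sqrt ((Real.cos θ)^2 + (Real.sin θ)^2) = 1 := by
      rw [Real.cos_sq_add_sin_sq, Real.sqrt_one]
    simp only [hsqrt, one_smul] at heq
    have e1 := congrArg Prod.fst heq
    have e2 := congrArg Prod.snd heq
    simp only at e1 e2
    set x := (v (Real.cos θ, Real.sin θ)).1 with hx
    set y := (v (Real.cos θ, Real.sin θ)).2 with hy
    set s := Real.sin (θ/2) with hs
    set c := Real.cos (θ/2) with hc
    have hcos : Real.cos θ = 2*c^2 - 1 := by
      rw [show θ = 2*(θ/2) by ring, Real.cos_two_mul]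
    have hsin : Real.sin θ = 2*s*c := by
      rw [show θ = 2*(θ/2) by ring, Real.sin_two_mul]
    have hsc : s^2 + c^2 = 1 := Real.sin_sq_add_cos_sq (θ/2)
    rw [hcos, hsin] at e1 e2
    have h1 : s * (c*y - s*x) = 0 := by linear_combination (1/2)*e1 - x*hsc
    have h2 : c * (s*x - c*y) = 0 := by linear_combination (1/2)*e2
    have hg : c*y - s*x = 0 := by
      linear_combination s*h1 - c*h2 - (c*y - s*x)*hsc
    constructor
    · show x = c * (c*x + s*y)
      linear_combination (-x)*hsc - s*hg
    · show y = s * (c*x + s*y)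
      linear_combination (-y)*hsc + c*hg
  have hfne : ∀ θ : ℝ, f θ ≠ 0 := by
    intro θ hf0
    have hvne := (hev (Real.cos θ, Real.sin θ) (hne θ)).1
    obtain ⟨k1, k2⟩ := key θ
    rw [hf0, mul_zero] at k1 k2
    exact hvne (Prod.ext k1 k2)
  have hf0 : f 0 = (v (1, 0)).1 := by
    simp [hfdef]
  have hf2pi : f (2 * Real.pi) = -(v (1, 0)).1 := by
    have h1 : (2 * Real.pi) / 2 = Real.pi := by ring
    simp [hfdef, h1, Real.cos_two_pi, Real.sin_two_pi, Real.cos_pi, Real.sin_pi]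
  have hneg : f (2 * Real.pi) = - f 0 := by rw [hf2pi, hf0]
  obtain ⟨θ, hθ⟩ : ∃ θ, f θ = 0 := by
    rcases lt_or_gt_of_ne (hfne 0) with h | h
    · have h0 : (0:ℝ) ∈ Set.Icc (f 0) (f (2 * Real.pi)) :=
        ⟨le_of_lt h, by rw [hneg]; linarith⟩
      exact intermediate_value_univ 0 (2 * Real.pi) hcont h0
    · have h0 : (0:ℝ) ∈ Set.Icc (f (2 * Real.pi)) (f 0) :=
        ⟨by rw [hneg]; linarith, le_of_lt h⟩
      exact intermediate_value_univ (2 * Real.pi) 0 hcont h0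
  exact hfne θ hθ
end
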